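/- arXiv:1905.08029 — 6 statements merged into one kernel-verified Lean document; each statement's English description precedes it below -/
import Mathlib

section
/- The flux extension is central: for all g ∈ G and h ∈ G_rel, the commutator g ∘ h ∘ g⁻¹ ∘ h⁻¹ belongs to G_rel and flux_ℝ(g ∘ h ∘ g⁻¹ ∘ h⁻¹) = 0; equivalently, the image of G_rel/K in G/K lies in the center of G/K, where K = Ker flux_ℝ. -/
open MeasureTheory

set_option maxHeartbeats 2000000
noncomputable section

/-- The closed unit disk in `ℝ²`. -/
def Disk : Set (ℝ × ℝ) := {p | p.1 ^ 2 + p.2 ^ 2 ≤ 1}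

/-- The boundary circle `∂D` of the unit disk. -/
def Bdry : Set (ℝ × ℝ) := {p | p.1 ^ 2 + p.2 ^ 2 = 1}

/-- A symplectomorphism of the closed unit disk `D`: a bijection of `D` which, together
with its inverse, extends to a `C^∞` map on an open neighborhood of `D`, and whose
Jacobian determinant equals `1` at every point of `D`. -/
structure SympD where
  toFun : ℝ × ℝ → ℝ × ℝ
  invFun : ℝ × ℝ → ℝ × ℝ
  mapsTo : Set.MapsTo toFun Disk Disk
  invMapsTo : Set.MapsTo invFun Disk Disk
  leftInv : ∀ p ∈ Disk, invFun (toFun p) = p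
  rightInv : ∀ p ∈ Disk, toFun (invFun p) = p
  smooth : ∃ U : Set (ℝ × ℝ), IsOpen U ∧ Disk ⊆ U ∧ ContDiffOn ℝ (⊤ : ℕ∞) toFun U
  invSmooth : ∃ U : Set (ℝ × ℝ), IsOpen U ∧ Disk ⊆ U ∧ ContDiffOn ℝ (⊤ : ℕ∞) invFun U
  areaPreserving : ∀ p ∈ Disk,
    (fderiv ℝ toFun p (1, 0)).1 * (fderiv ℝ toFun p (0, 1)).2
      - (fderiv ℝ toFun p (0, 1)).1 * (fderiv ℝ toFun p (1, 0)).2 = 1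

/-- `g ∈ H_rel`: the restriction of `g` to the boundary circle is the identity. -/
def IsRel (g : SympD) : Prop := ∀ p ∈ Bdry, g.toFun p = p

/-- `g ∈ G`: `g` fixes the origin. -/
def FixesOrigin (g : SympD) : Prop := g.toFun (0, 0) = (0, 0)

/-- `g ∈ G_rel = G ∩ H_rel`. -/
def IsGrel (g : SympD) : Prop := FixesOrigin g ∧ IsRel g

/-- `gh` coincides on `D` with the composite `g ∘ h`. -/
def IsComp (g h gh : SympD) : Prop := ∀ p ∈ Disk, gh.toFun p = g.toFun (h.toFun p)

/-- The 1-cochain `τ(g) = ∫_γ (g*η − η) = ∫₀¹ ½(g₁ ∂₁g₂ − g₂ ∂₁g₁)(t,0) dt`,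
where `γ(t) = (t,0)` and `η = (x dy − y dx)/2` vanishes along `γ`. -/
def tau (g : SympD) : ℝ :=
  ∫ t in (0:ℝ)..1, (1 / 2) *
    ((g.toFun (t, 0)).1 * (fderiv ℝ g.toFun (t, 0) (1, 0)).2
      - (g.toFun (t, 0)).2 * (fderiv ℝ g.toFun (t, 0) (1, 0)).1)

/-- `φ : ℝ → ℝ` is a lift of the boundary restriction `g|_{∂D}`. -/
def IsLift (g : SympD) (φ : ℝ → ℝ) : Prop :=
  ContDiff ℝ (⊤ : ℕ∞) φ ∧ (∀ θ : ℝ, φ (θ + 2 * Real.pi) = φ θ + 2 * Real.pi) ∧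
    ∀ θ : ℝ, g.toFun (Real.cos θ, Real.sin θ) = (Real.cos (φ θ), Real.sin (φ θ))

/-- `F` is the primitive `F_g` of the closed 1-form `g*η − η` on `D`, normalized by
`F(x₀) = 0` at `x₀ = (1,0)`: it is `C^∞` on a neighborhood of `D` and satisfies
`dF = g*η − η` at every point of `D`. -/
def IsPrimitive (g : SympD) (F : ℝ × ℝ → ℝ) : Prop :=
  (∃ U : Set (ℝ × ℝ), IsOpen U ∧ Disk ⊆ U ∧ ContDiffOn ℝ (⊤ : ℕ∞) F U) ∧
  (∀ p ∈ Disk, ∀ v : ℝ × ℝ,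
    fderiv ℝ F p v =
      (1 / 2) * ((g.toFun p).1 * (fderiv ℝ g.toFun p v).2
        - (g.toFun p).2 * (fderiv ℝ g.toFun p v).1)
      - (1 / 2) * (p.1 * v.2 - p.2 * v.1)) ∧
  F (1, 0) = 0

/-- `κ(g) = −∫_{∂D} F_g η = −½ ∫₀^{2π} F_g(cos θ, sin θ) dθ`, expressed in terms of a
chosen primitive `F = F_g`. -/
def kappaOf (F : ℝ × ℝ → ℝ) : ℝ :=
  -(1 / 2) * ∫ θ in (0:ℝ)..(2 * Real.pi), F (Real.cos θ, Real.sin θ)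

/-- The 1-cochain `τ₀(g) = ∫_D g*η ∧ η
 = ∬_D ¼[(g₁ ∂ₓg₂ − g₂ ∂ₓg₁)x + (g₁ ∂_yg₂ − g₂ ∂_yg₁)y] dx dy`. -/
def tau0 (g : SympD) : ℝ :=
  ∫ p in Disk, (1 / 4) *
    (((g.toFun p).1 * (fderiv ℝ g.toFun p (1, 0)).2
        - (g.toFun p).2 * (fderiv ℝ g.toFun p (1, 0)).1) * p.1
      + ((g.toFun p).1 * (fderiv ℝ g.toFun p (0, 1)).2
        - (g.toFun p).2 * (fderiv ℝ g.toFun p (0, 1)).1) * p.2)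

namespace FluxAux

def IntD : Set (ℝ × ℝ) := {p | p.1 ^ 2 + p.2 ^ 2 < 1}

lemma isOpen_IntD : IsOpen IntD :=
  isOpen_lt (by fun_prop) continuous_const

lemma IntD_subset_Disk : IntD ⊆ Disk := fun p hp =>
  show p.1 ^ 2 + p.2 ^ 2 ≤ 1 from le_of_lt hp

lemma Bdry_subset_Disk : Bdry ⊆ Disk := fun p hp => le_of_eq hp

lemma mem_IntD_or_Bdry {p : ℝ × ℝ} (hp : p ∈ Disk) : p ∈ IntD ∨ p ∈ Bdry := by
  rcases lt_or_eq_of_le (show p.1 ^ 2 + p.2 ^ 2 ≤ 1 from hp) with h | h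
  · exact Or.inl h
  · exact Or.inr h

lemma disk_mem_nhds {p : ℝ × ℝ} (hp : p ∈ IntD) : Disk ∈ nhds p :=
  Filter.mem_of_superset (isOpen_IntD.mem_nhds hp) IntD_subset_Disk

lemma convex_IntD : Convex ℝ IntD := by
  intro p hp q hq a b ha hb hab
  simp only [IntD, Set.mem_setOf_eq] at *
  simp only [Prod.fst_add, Prod.snd_add, Prod.smul_fst, Prod.smul_snd, smul_eq_mul]
  rcases eq_or_lt_of_le hb with hb0 | hb0
  · have haa : a = 1 := by linarith
    have hbb : b = 0 := hb0.symm
    subst haa; subst hbb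
    simpa using hp
  · nlinarith [mul_nonneg (mul_nonneg ha hb) (sq_nonneg (p.1 - q.1)),
      mul_nonneg (mul_nonneg ha hb) (sq_nonneg (p.2 - q.2)),
      mul_lt_mul_of_pos_left hq hb0, mul_le_mul_of_nonneg_left hp.le ha]

lemma zero_mem_IntD : ((0:ℝ), (0:ℝ)) ∈ IntD := by simp [IntD]

lemma zero_mem_Disk : ((0:ℝ), (0:ℝ)) ∈ Disk := by simp [Disk]

lemma one_zero_mem_Bdry : ((1:ℝ), (0:ℝ)) ∈ Bdry := by simp [Bdry]

lemma one_zero_mem_Disk : ((1:ℝ), (0:ℝ)) ∈ Disk := by simp [Disk]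

lemma seg_mem_Disk {p : ℝ × ℝ} (hp : p ∈ Disk) {t : ℝ} (ht : t ∈ Set.Icc (0:ℝ) 1) :
    t • p ∈ Disk := by
  have h1 : (t • p).1 = t * p.1 := rfl
  have h2 : (t • p).2 = t * p.2 := rfl
  have := hp
  simp only [Disk, Set.mem_setOf_eq] at *
  rw [h1, h2]
  nlinarith [ht.1, ht.2, sq_nonneg t]

lemma compact_Disk : IsCompact Disk := by
  have hcl : IsClosed Disk := isClosed_le (by fun_prop) continuous_const
  have hbd : Disk ⊆ Metric.closedBall 0 1 := by
    intro p hp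
    have hp' : p.1 ^ 2 + p.2 ^ 2 ≤ 1 := hp
    simp only [Metric.mem_closedBall, dist_zero_right]
    rw [Prod.norm_def]
    apply max_le <;> rw [Real.norm_eq_abs, abs_le] <;> constructor <;> nlinarith
  exact (isCompact_closedBall (0:ℝ×ℝ) 1).of_isClosed_subset hcl hbd

lemma segIcc_mem_Disk {p : ℝ × ℝ} (hp : p ∈ Disk) {t : ℝ} (h0 : 0 ≤ t) (h1 : t ≤ 1) :
    t • p ∈ Disk := seg_mem_Disk hp ⟨h0, h1⟩

/-- Given an open `U ⊇ Disk`, a slightly larger open "ball" which is star-shaped about 0. -/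
lemma exists_star_nbhd {U : Set (ℝ × ℝ)} (hU : IsOpen U) (hDU : Disk ⊆ U) :
    ∃ B : Set (ℝ × ℝ), IsOpen B ∧ Disk ⊆ B ∧ B ⊆ U ∧
      (∀ p ∈ B, ∀ t : ℝ, 0 ≤ t → t ≤ 1 → t • p ∈ B) := by
  obtain ⟨δ, hδpos, hδ⟩ := compact_Disk.exists_thickening_subset_open hU hDU
  refine ⟨{p | p.1 ^ 2 + p.2 ^ 2 < (1 + δ) ^ 2}, isOpen_lt (by fun_prop) continuous_const,
    ?_, ?_, ?_⟩
  · intro p hp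
    have : p.1 ^ 2 + p.2 ^ 2 ≤ 1 := hp
    have : (1:ℝ) < (1 + δ) ^ 2 := by nlinarith
    simp only [Set.mem_setOf_eq]; linarith
  · intro p hp
    by_cases hpd : p ∈ Disk
    · exact hDU hpd
    · apply hδ
      -- p ∉ Disk: 1 < p.1^2+p.2^2 < (1+δ)^2
      have hgt : 1 < p.1 ^ 2 + p.2 ^ 2 := by
        by_contra h
        exact hpd (le_of_not_gt h)
      set r : ℝ := Real.sqrt (p.1 ^ 2 + p.2 ^ 2) with hr
      have hr1 : 1 < r := by
        rw [hr]
        nlinarith [Real.sq_sqrt (by positivity : (0:ℝ) ≤ p.1 ^ 2 + p.2 ^ 2),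
          Real.sqrt_nonneg (p.1 ^ 2 + p.2 ^ 2)]
      have hrsq : r ^ 2 = p.1 ^ 2 + p.2 ^ 2 :=
        Real.sq_sqrt (by positivity)
      have hrδ : r < 1 + δ := by
        have hlt : p.1 ^ 2 + p.2 ^ 2 < (1 + δ) ^ 2 := hp
        nlinarith
      have hq : (r⁻¹ • p) ∈ Disk := by
        have h1 : (r⁻¹ • p).1 = r⁻¹ * p.1 := rfl
        have h2 : (r⁻¹ • p).2 = r⁻¹ * p.2 := rfl
        simp only [Disk, Set.mem_setOf_eq, h1, h2]
        have hrne : r ≠ 0 := by linarith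
        field_simp
        linarith [hrsq]
      rw [Metric.mem_thickening_iff]
      refine ⟨r⁻¹ • p, hq, ?_⟩
      have hdd : dist p (r⁻¹ • p) = ‖p - r⁻¹ • p‖ := dist_eq_norm _ _
      have hsub : p - r⁻¹ • p = (1 - r⁻¹) • p := by
        rw [sub_smul, one_smul]
      have hnorm : ‖(1 - r⁻¹) • p‖ = |1 - r⁻¹| * ‖p‖ := by
        rw [norm_smul, Real.norm_eq_abs]
      have hpnorm : ‖p‖ ≤ r := by
        have h1 : |p.1| ≤ r := by
          rw [abs_le]; constructor <;> nlinarith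
        have h2 : |p.2| ≤ r := by
          rw [abs_le]; constructor <;> nlinarith
        calc ‖p‖ = max ‖p.1‖ ‖p.2‖ := rfl
        _ ≤ r := by
            rw [max_le_iff]
            constructor <;> simpa [Real.norm_eq_abs]
      have habs : |1 - r⁻¹| = 1 - r⁻¹ := by
        rw [abs_of_nonneg]
        have : r⁻¹ ≤ 1 := by
          rw [inv_le_one_iff₀]; right; linarith
        linarith
      have hle : dist p (r⁻¹ • p) ≤ (1 - r⁻¹) * r := by
        rw [hdd, hsub, hnorm, habs]
        apply mul_le_mul_of_nonneg_left hpnorm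
        have : r⁻¹ ≤ 1 := by rw [inv_le_one_iff₀]; right; linarith
        linarith
      have : (1 - r⁻¹) * r = r - 1 := by
        have hrne : r ≠ 0 := by linarith
        field_simp
      calc dist p (r⁻¹ • p) ≤ (1 - r⁻¹) * r := hle
        _ = r - 1 := this
        _ < δ := by linarith
  · intro p hp t ht0 ht1
    have h1 : (t • p).1 = t * p.1 := rfl
    have h2 : (t • p).2 = t * p.2 := rfl
    simp only [Set.mem_setOf_eq] at *
    rw [h1, h2]
    have hs : (0:ℝ) ≤ p.1 ^ 2 + p.2 ^ 2 := by positivity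
    have ht2 : t ^ 2 ≤ 1 := by nlinarith
    calc (t * p.1) ^ 2 + (t * p.2) ^ 2 = t ^ 2 * (p.1 ^ 2 + p.2 ^ 2) := by ring
    _ ≤ 1 * (p.1 ^ 2 + p.2 ^ 2) := by nlinarith
    _ < (1 + δ) ^ 2 := by linarith


lemma clm_decomp {E : Type*} [NormedAddCommGroup E] [NormedSpace ℝ E]
    (L : (ℝ×ℝ) →L[ℝ] E) (v : ℝ×ℝ) :
    L v = v.1 • L (1,0) + v.2 • L (0,1) := by
  have hv : v = v.1 • ((1:ℝ),(0:ℝ)) + v.2 • ((0:ℝ),(1:ℝ)) := by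
    ext <;> simp
  conv_lhs => rw [hv]
  rw [map_add, L.map_smul, L.map_smul]

def P1 (f : ℝ×ℝ → ℝ×ℝ) (p : ℝ×ℝ) : ℝ :=
  (1/2) * ((f p).1 * (fderiv ℝ f p (1,0)).2 - (f p).2 * (fderiv ℝ f p (1,0)).1)
    + (1/2) * p.2

def P2 (f : ℝ×ℝ → ℝ×ℝ) (p : ℝ×ℝ) : ℝ :=
  (1/2) * ((f p).1 * (fderiv ℝ f p (0,1)).2 - (f p).2 * (fderiv ℝ f p (0,1)).1)
    - (1/2) * p.1

def Lmap (f : ℝ×ℝ → ℝ×ℝ) (p : ℝ×ℝ) : (ℝ×ℝ) →L[ℝ] ℝ :=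
  P1 f p • ContinuousLinearMap.fst ℝ ℝ ℝ + P2 f p • ContinuousLinearMap.snd ℝ ℝ ℝ

lemma Lmap_apply (f : ℝ×ℝ → ℝ×ℝ) (p v : ℝ×ℝ) :
    Lmap f p v = P1 f p * v.1 + P2 f p * v.2 := by
  simp [Lmap]

lemma contDiffOn_dcomp {f : ℝ×ℝ → ℝ×ℝ} {U : Set (ℝ×ℝ)} (hU : IsOpen U)
    (hf : ContDiffOn ℝ (⊤:ℕ∞) f U) (v : ℝ×ℝ) :
    ContDiffOn ℝ (⊤:ℕ∞) (fun p => fderiv ℝ f p v) U :=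
  (hf.fderiv_of_isOpen hU (by exact_mod_cast le_top)).clm_apply contDiffOn_const

lemma contDiffOn_P1 {f : ℝ×ℝ → ℝ×ℝ} {U : Set (ℝ×ℝ)} (hU : IsOpen U)
    (hf : ContDiffOn ℝ (⊤:ℕ∞) f U) : ContDiffOn ℝ (⊤:ℕ∞) (P1 f) U := by
  unfold P1
  exact (contDiffOn_const.mul ((hf.fst.mul (contDiffOn_dcomp hU hf _).snd).sub
    (hf.snd.mul (contDiffOn_dcomp hU hf _).fst))).add
    (contDiffOn_const.mul contDiff_snd.contDiffOn)

lemma contDiffOn_P2 {f : ℝ×ℝ → ℝ×ℝ} {U : Set (ℝ×ℝ)} (hU : IsOpen U)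
    (hf : ContDiffOn ℝ (⊤:ℕ∞) f U) : ContDiffOn ℝ (⊤:ℕ∞) (P2 f) U := by
  unfold P2
  exact (contDiffOn_const.mul ((hf.fst.mul (contDiffOn_dcomp hU hf _).snd).sub
    (hf.snd.mul (contDiffOn_dcomp hU hf _).fst))).sub
    (contDiffOn_const.mul contDiff_fst.contDiffOn)

lemma hasFDerivAt_of_contDiffOn {E F : Type*} [NormedAddCommGroup E] [NormedSpace ℝ E]
    [NormedAddCommGroup F] [NormedSpace ℝ F] {f : E → F} {U : Set E} (hU : IsOpen U)
    (hf : ContDiffOn ℝ (⊤:ℕ∞) f U) {y : E} (hy : y ∈ U) :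
    HasFDerivAt f (fderiv ℝ f y) y :=
  ((hf.contDiffAt (hU.mem_nhds hy)).differentiableAt (by simp)).hasFDerivAt


section
open ContinuousLinearMap
lemma closedness {f : ℝ×ℝ → ℝ×ℝ} {U : Set (ℝ×ℝ)} (hU : IsOpen U)
    (hf : ContDiffOn ℝ (⊤:ℕ∞) f U) {y : ℝ×ℝ} (hy : y ∈ U)
    (harea : (fderiv ℝ f y (1,0)).1 * (fderiv ℝ f y (0,1)).2
      - (fderiv ℝ f y (0,1)).1 * (fderiv ℝ f y (1,0)).2 = 1) :
    fderiv ℝ (P1 f) y (0,1) = fderiv ℝ (P2 f) y (1,0) := by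
  have hf' : ContDiffOn ℝ (⊤:ℕ∞) (fderiv ℝ f) U :=
    hf.fderiv_of_isOpen hU (by exact_mod_cast le_top)
  have hDf' : HasFDerivAt (fderiv ℝ f) (fderiv ℝ (fderiv ℝ f) y) y :=
    hasFDerivAt_of_contDiffOn hU hf' hy
  set f'' := fderiv ℝ (fderiv ℝ f) y with hf''def
  have hev : ∀ᶠ z in nhds y, HasFDerivAt f (fderiv ℝ f z) z := by
    filter_upwards [hU.mem_nhds hy] with z hz using hasFDerivAt_of_contDiffOn hU hf hz
  have hsym : ∀ v w : ℝ×ℝ, f'' v w = f'' w v := fun v w =>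
    second_derivative_symmetric_of_eventually hev hDf' v w
  have hF : HasFDerivAt f (fderiv ℝ f y) y := hasFDerivAt_of_contDiffOn hU hf hy
  have hdv : ∀ v : ℝ×ℝ, HasFDerivAt (fun z => fderiv ℝ f z v)
      ((ContinuousLinearMap.apply ℝ (ℝ×ℝ) v).comp f'') y := fun v =>
    (ContinuousLinearMap.apply ℝ (ℝ×ℝ) v).hasFDerivAt.comp y hDf'
  have hc1 : HasFDerivAt (fun z => (f z).1) ((fst ℝ ℝ ℝ).comp (fderiv ℝ f y)) y :=
    (fst ℝ ℝ ℝ).hasFDerivAt.comp y hF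
  have hc2 : HasFDerivAt (fun z => (f z).2) ((snd ℝ ℝ ℝ).comp (fderiv ℝ f y)) y :=
    (snd ℝ ℝ ℝ).hasFDerivAt.comp y hF
  have hd1 : ∀ v : ℝ×ℝ, HasFDerivAt (fun z => (fderiv ℝ f z v).1)
      ((fst ℝ ℝ ℝ).comp ((ContinuousLinearMap.apply ℝ (ℝ×ℝ) v).comp f'')) y := fun v =>
    (fst ℝ ℝ ℝ).hasFDerivAt.comp y (hdv v)
  have hd2 : ∀ v : ℝ×ℝ, HasFDerivAt (fun z => (fderiv ℝ f z v).2)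
      ((snd ℝ ℝ ℝ).comp ((ContinuousLinearMap.apply ℝ (ℝ×ℝ) v).comp f'')) y := fun v =>
    (snd ℝ ℝ ℝ).hasFDerivAt.comp y (hdv v)
  have hsndid : HasFDerivAt (fun z : ℝ×ℝ => z.2) (snd ℝ ℝ ℝ) y := (snd ℝ ℝ ℝ).hasFDerivAt
  have hfstid : HasFDerivAt (fun z : ℝ×ℝ => z.1) (fst ℝ ℝ ℝ) y := (fst ℝ ℝ ℝ).hasFDerivAt
  have hP1' := (((hc1.mul (hd2 (1,0))).sub (hc2.mul (hd1 (1,0)))).const_mul ((1:ℝ)/2)).add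
    (hsndid.const_mul ((1:ℝ)/2))
  have hP2' := (((hc1.mul (hd2 (0,1))).sub (hc2.mul (hd1 (0,1)))).const_mul ((1:ℝ)/2)).sub
    (hfstid.const_mul ((1:ℝ)/2))
  have hP1 : HasFDerivAt (P1 f) _ y := hP1'
  have hP2 : HasFDerivAt (P2 f) _ y := hP2'
  rw [hP1.fderiv, hP2.fderiv]
  simp only [ContinuousLinearMap.add_apply, ContinuousLinearMap.sub_apply,
    ContinuousLinearMap.smul_apply, ContinuousLinearMap.comp_apply,
    ContinuousLinearMap.coe_fst', ContinuousLinearMap.coe_snd',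
    ContinuousLinearMap.apply_apply, smul_eq_mul]
  have h12 := hsym (1,0) (0,1)
  have h1 : (f'' (1,0) (0,1)).1 = (f'' (0,1) (1,0)).1 := by rw [h12]
  have h2 : (f'' (1,0) (0,1)).2 = (f'' (0,1) (1,0)).2 := by rw [h12]
  linear_combination (-(1:ℝ)/2) * (f y).1 * h2 + ((1:ℝ)/2) * (f y).2 * h1 - harea
end
def Fprim (f : ℝ×ℝ → ℝ×ℝ) (p : ℝ×ℝ) : ℝ :=
  ∫ t in (0:ℝ)..1, (P1 f (t • p) * p.1 + P2 f (t • p) * p.2)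

section poincare
open ContinuousLinearMap intervalIntegral

lemma uIoc_01 : Set.uIoc (0:ℝ) 1 = Set.Ioc 0 1 := Set.uIoc_of_le zero_le_one
lemma uIcc_01 : Set.uIcc (0:ℝ) 1 = Set.Icc 0 1 := Set.uIcc_of_le zero_le_one

lemma hasFDerivAt_Fprim {f : ℝ×ℝ → ℝ×ℝ} {U : Set (ℝ×ℝ)} (hU : IsOpen U) (hDU : Disk ⊆ U)
    (hf : ContDiffOn ℝ (⊤:ℕ∞) f U)
    (harea : ∀ p ∈ Disk, (fderiv ℝ f p (1,0)).1 * (fderiv ℝ f p (0,1)).2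
      - (fderiv ℝ f p (0,1)).1 * (fderiv ℝ f p (1,0)).2 = 1)
    {p₀ : ℝ×ℝ} (hp₀ : p₀ ∈ Disk) :
    HasFDerivAt (Fprim f) (Lmap f p₀) p₀ := by
  obtain ⟨B, hBopen, hDB, hBU, hBstar⟩ := exists_star_nbhd hU hDU
  have hfB : ContDiffOn ℝ (⊤:ℕ∞) f B := hf.mono hBU
  have hP1B : ContDiffOn ℝ (⊤:ℕ∞) (P1 f) B := contDiffOn_P1 hBopen hfB
  have hP2B : ContDiffOn ℝ (⊤:ℕ∞) (P2 f) B := contDiffOn_P2 hBopen hfB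
  have hDP1B : ContinuousOn (fderiv ℝ (P1 f)) B :=
    hP1B.continuousOn_fderiv_of_isOpen hBopen (by exact_mod_cast le_top)
  have hDP2B : ContinuousOn (fderiv ℝ (P2 f)) B :=
    hP2B.continuousOn_fderiv_of_isOpen hBopen (by exact_mod_cast le_top)
  have hp₀B : p₀ ∈ B := hDB hp₀
  obtain ⟨ε, hε, hball⟩ : ∃ ε > 0, Metric.closedBall p₀ ε ⊆ B :=
    Metric.nhds_basis_closedBall.mem_iff.mp (hBopen.mem_nhds hp₀B)
  set K : Set (ℝ×ℝ) := Set.image2 (fun (t:ℝ) (x:ℝ×ℝ) => t • x) (Set.Icc (0:ℝ) 1)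
    (Metric.closedBall p₀ ε) with hK
  have hKB : K ⊆ B := by
    rintro z ⟨t, ht, x, hx, rfl⟩
    exact hBstar x (hball hx) t ht.1 ht.2
  have hKcompact : IsCompact K := by
    rw [hK, ← Set.image_prod]
    exact (isCompact_Icc.prod (isCompact_closedBall p₀ ε)).image
      (continuous_fst.smul continuous_snd)
  have hmemK : ∀ t ∈ Set.Icc (0:ℝ) 1, ∀ x ∈ Metric.ball p₀ ε, t • x ∈ K := by
    intro t ht x hx
    exact ⟨t, ht, x, Metric.ball_subset_closedBall hx, rfl⟩
  -- smul curve facts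
  have hsmulmem : ∀ t ∈ Set.Icc (0:ℝ) 1, ∀ x ∈ Metric.ball p₀ ε, t • x ∈ B :=
    fun t ht x hx => hKB (hmemK t ht x hx)
  -- bounds on the compact set K
  obtain ⟨C1, hC1⟩ := hKcompact.exists_bound_of_continuousOn (hDP1B.mono hKB)
  obtain ⟨C2, hC2⟩ := hKcompact.exists_bound_of_continuousOn (hDP2B.mono hKB)
  obtain ⟨C3, hC3⟩ := hKcompact.exists_bound_of_continuousOn ((hP1B.continuousOn).mono hKB)
  obtain ⟨C4, hC4⟩ := hKcompact.exists_bound_of_continuousOn ((hP2B.continuousOn).mono hKB)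
  have hC1' : 0 ≤ C1 := le_trans (norm_nonneg _) (hC1 _ (hmemK 0 ⟨le_refl 0, zero_le_one⟩ p₀ (Metric.mem_ball_self hε)))
  have hC2' : 0 ≤ C2 := le_trans (norm_nonneg _) (hC2 _ (hmemK 0 ⟨le_refl 0, zero_le_one⟩ p₀ (Metric.mem_ball_self hε)))
  have hC3' : 0 ≤ C3 := le_trans (norm_nonneg _) (hC3 _ (hmemK 0 ⟨le_refl 0, zero_le_one⟩ p₀ (Metric.mem_ball_self hε)))
  have hC4' : 0 ≤ C4 := le_trans (norm_nonneg _) (hC4 _ (hmemK 0 ⟨le_refl 0, zero_le_one⟩ p₀ (Metric.mem_ball_self hε)))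
  set R : ℝ := ‖p₀‖ + ε with hR
  have hxn : ∀ x ∈ Metric.ball p₀ ε, ‖x‖ ≤ R := by
    intro x hx
    have := Metric.mem_ball.mp hx
    calc ‖x‖ = ‖p₀ + (x - p₀)‖ := by ring_nf
    _ ≤ ‖p₀‖ + ‖x - p₀‖ := norm_add_le _ _
    _ ≤ ‖p₀‖ + ε := by
        have : ‖x - p₀‖ = dist x p₀ := (dist_eq_norm _ _).symm
        rw [this]; linarith [Metric.mem_ball.mp hx]
  -- derivative candidate
  set DP1 : ℝ×ℝ → (ℝ×ℝ) →L[ℝ] ℝ := fderiv ℝ (P1 f) with hDP1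
  set DP2 : ℝ×ℝ → (ℝ×ℝ) →L[ℝ] ℝ := fderiv ℝ (P2 f) with hDP2
  set F' : (ℝ×ℝ) → ℝ → ((ℝ×ℝ) →L[ℝ] ℝ) := fun x t =>
    (P1 f (t • x) • fst ℝ ℝ ℝ +
      x.1 • ((DP1 (t • x)).comp (t • ContinuousLinearMap.id ℝ (ℝ×ℝ)))) +
    (P2 f (t • x) • snd ℝ ℝ ℝ +
      x.2 • ((DP2 (t • x)).comp (t • ContinuousLinearMap.id ℝ (ℝ×ℝ)))) with hF'
  have hfst1 : ‖fst ℝ ℝ ℝ‖ ≤ 1 :=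
    (fst ℝ ℝ ℝ).opNorm_le_bound zero_le_one (fun v => by simpa using norm_fst_le v)
  have hsnd1 : ‖snd ℝ ℝ ℝ‖ ≤ 1 :=
    (snd ℝ ℝ ℝ).opNorm_le_bound zero_le_one (fun v => by simpa using norm_snd_le v)
  have hdiff : ∀ t ∈ Set.Icc (0:ℝ) 1, ∀ x ∈ Metric.ball p₀ ε,
      HasFDerivAt (fun x => P1 f (t • x) * x.1 + P2 f (t • x) * x.2) (F' x t) x := by
    intro t ht x hx
    have hsm : HasFDerivAt (fun x : ℝ×ℝ => t • x) (t • ContinuousLinearMap.id ℝ (ℝ×ℝ)) x :=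
      (hasFDerivAt_id x).const_smul t
    have h1 : HasFDerivAt (fun x => P1 f (t • x))
        ((DP1 (t • x)).comp (t • ContinuousLinearMap.id ℝ (ℝ×ℝ))) x :=
      (hasFDerivAt_of_contDiffOn hBopen hP1B (hsmulmem t ht x hx)).comp x hsm
    have h2 : HasFDerivAt (fun x => P2 f (t • x))
        ((DP2 (t • x)).comp (t • ContinuousLinearMap.id ℝ (ℝ×ℝ))) x :=
      (hasFDerivAt_of_contDiffOn hBopen hP2B (hsmulmem t ht x hx)).comp x hsm
    exact (h1.mul ((fst ℝ ℝ ℝ).hasFDerivAt)).add (h2.mul ((snd ℝ ℝ ℝ).hasFDerivAt))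
  have hbnd : ∀ t ∈ Set.Icc (0:ℝ) 1, ∀ x ∈ Metric.ball p₀ ε,
      ‖F' x t‖ ≤ C3 + R * C1 + (C4 + R * C2) := by
    intro t ht x hx
    have hzK : t • x ∈ K := hmemK t ht x hx
    have ht1 : |t| ≤ 1 := by rw [abs_le]; constructor <;> linarith [ht.1, ht.2]
    apply ContinuousLinearMap.opNorm_le_bound _ (by positivity)
    intro v
    have e0 : F' x t v = P1 f (t • x) * v.1 + x.1 * (DP1 (t • x) (t • v))
        + (P2 f (t • x) * v.2 + x.2 * (DP2 (t • x) (t • v))) := by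
      simp [hF', ContinuousLinearMap.add_apply, ContinuousLinearMap.smul_apply,
        ContinuousLinearMap.comp_apply, ContinuousLinearMap.coe_fst',
        ContinuousLinearMap.coe_snd', ContinuousLinearMap.coe_id', smul_eq_mul]
    rw [e0]
    have htv : ‖t • v‖ ≤ ‖v‖ := by
      have : ‖t • v‖ = |t| * ‖v‖ := by rw [norm_smul, Real.norm_eq_abs]
      rw [this]
      nlinarith [norm_nonneg v, abs_nonneg t]
    have b1 : |DP1 (t • x) (t • v)| ≤ C1 * ‖v‖ := by
      calc |DP1 (t • x) (t • v)| ≤ ‖DP1 (t • x)‖ * ‖t • v‖ := (DP1 (t • x)).le_opNorm _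
      _ ≤ C1 * ‖v‖ := mul_le_mul (hC1 _ hzK) htv (norm_nonneg _) hC1'
    have b2 : |DP2 (t • x) (t • v)| ≤ C2 * ‖v‖ := by
      calc |DP2 (t • x) (t • v)| ≤ ‖DP2 (t • x)‖ * ‖t • v‖ := (DP2 (t • x)).le_opNorm _
      _ ≤ C2 * ‖v‖ := mul_le_mul (hC2 _ hzK) htv (norm_nonneg _) hC2'
    have bv1 : |v.1| ≤ ‖v‖ := by simpa [Real.norm_eq_abs] using norm_fst_le v
    have bv2 : |v.2| ≤ ‖v‖ := by simpa [Real.norm_eq_abs] using norm_snd_le v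
    have bx1 : |x.1| ≤ R := le_trans (by simpa [Real.norm_eq_abs] using norm_fst_le x) (hxn x hx)
    have bx2 : |x.2| ≤ R := le_trans (by simpa [Real.norm_eq_abs] using norm_snd_le x) (hxn x hx)
    have bP1 : |P1 f (t • x)| ≤ C3 := by simpa [Real.norm_eq_abs] using hC3 _ hzK
    have bP2 : |P2 f (t • x)| ≤ C4 := by simpa [Real.norm_eq_abs] using hC4 _ hzK
    have hRnn : 0 ≤ R := by positivity
    calc ‖P1 f (t • x) * v.1 + x.1 * (DP1 (t • x) (t • v))
        + (P2 f (t • x) * v.2 + x.2 * (DP2 (t • x) (t • v)))‖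
        ≤ |P1 f (t • x) * v.1| + |x.1 * (DP1 (t • x) (t • v))|
          + (|P2 f (t • x) * v.2| + |x.2 * (DP2 (t • x) (t • v))|) := by
          rw [Real.norm_eq_abs]
          exact le_trans (abs_add_le _ _) (add_le_add (abs_add_le _ _) (abs_add_le _ _))
    _ ≤ C3 * ‖v‖ + R * (C1 * ‖v‖) + (C4 * ‖v‖ + R * (C2 * ‖v‖)) := by
          apply add_le_add (add_le_add ?_ ?_) (add_le_add ?_ ?_)
          · rw [abs_mul]
            exact mul_le_mul bP1 bv1 (abs_nonneg _) hC3'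
          · rw [abs_mul]
            exact mul_le_mul bx1 b1 (abs_nonneg _) hRnn
          · rw [abs_mul]
            exact mul_le_mul bP2 bv2 (abs_nonneg _) hC4'
          · rw [abs_mul]
            exact mul_le_mul bx2 b2 (abs_nonneg _) hRnn
    _ = (C3 + R * C1 + (C4 + R * C2)) * ‖v‖ := by ring
  -- continuity in t for fixed x in the ball
  have hcont : ∀ x ∈ Metric.ball p₀ ε,
      ContinuousOn (fun t : ℝ => P1 f (t • x) * x.1 + P2 f (t • x) * x.2) (Set.Icc (0:ℝ) 1) := by
    intro x hx
    have hmap : Set.MapsTo (fun t : ℝ => t • x) (Set.Icc (0:ℝ) 1) B :=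
      fun t ht => hsmulmem t ht x hx
    have hco : ContinuousOn (fun t : ℝ => t • x) (Set.Icc (0:ℝ) 1) :=
      (continuous_id.smul continuous_const).continuousOn
    exact ((hP1B.continuousOn.comp hco hmap).mul continuousOn_const).add
      ((hP2B.continuousOn.comp hco hmap).mul continuousOn_const)
  have hcontF' : ContinuousOn (F' p₀) (Set.Icc (0:ℝ) 1) := by
    have hmap : Set.MapsTo (fun t : ℝ => t • p₀) (Set.Icc (0:ℝ) 1) B :=
      fun t ht => hsmulmem t ht p₀ (Metric.mem_ball_self hε)
    have hco : ContinuousOn (fun t : ℝ => t • p₀) (Set.Icc (0:ℝ) 1) :=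
      (continuous_id.smul continuous_const).continuousOn
    have hid : Continuous (fun t : ℝ => t • ContinuousLinearMap.id ℝ (ℝ×ℝ)) :=
      continuous_id.smul continuous_const
    apply ContinuousOn.add
    · apply ContinuousOn.add
      · exact ((hP1B.continuousOn.comp hco hmap)).smul continuousOn_const
      · exact ((hDP1B.comp hco hmap).clm_comp hid.continuousOn).const_smul p₀.1
    · apply ContinuousOn.add
      · exact ((hP2B.continuousOn.comp hco hmap)).smul continuousOn_const
      · exact ((hDP2B.comp hco hmap).clm_comp hid.continuousOn).const_smul p₀.2
  have hF'int : IntervalIntegrable (F' p₀) volume 0 1 := by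
    apply ContinuousOn.intervalIntegrable
    rwa [uIcc_01]
  -- the dominated differentiation theorem
  have main := intervalIntegral.hasFDerivAt_integral_of_dominated_of_fderiv_le
    (F := fun x t => P1 f (t • x) * x.1 + P2 f (t • x) * x.2) (F' := F') (x₀ := p₀)
    (bound := fun _ => C3 + R * C1 + (C4 + R * C2)) (a := 0) (b := 1) (μ := volume) (Metric.ball_mem_nhds p₀ hε)
    (by
      filter_upwards [Metric.ball_mem_nhds p₀ hε] with x hx
      apply ContinuousOn.aestronglyMeasurable _ measurableSet_uIoc
      rw [uIoc_01]
      exact (hcont x hx).mono Set.Ioc_subset_Icc_self)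
    (by
      apply ContinuousOn.intervalIntegrable
      rw [uIcc_01]
      exact hcont p₀ (Metric.mem_ball_self hε))
    (by
      apply ContinuousOn.aestronglyMeasurable _ measurableSet_uIoc
      rw [uIoc_01]
      exact hcontF'.mono Set.Ioc_subset_Icc_self)
    (by
      apply Filter.Eventually.of_forall
      intro t ht x hx
      rw [uIoc_01] at ht
      exact hbnd t (Set.Ioc_subset_Icc_self ht) x hx)
    intervalIntegrable_const
    (by
      apply Filter.Eventually.of_forall
      intro t ht x hx
      rw [uIoc_01] at ht
      exact hdiff t (Set.Ioc_subset_Icc_self ht) x hx)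
  -- identify the derivative
  have hFeq : HasFDerivAt (Fprim f) (∫ t in (0:ℝ)..1, F' p₀ t) p₀ := main
  convert hFeq using 1
  -- Lmap f p₀ = ∫ t in 0..1, F' p₀ t
  symm
  apply ContinuousLinearMap.ext
  intro v
  rw [ContinuousLinearMap.intervalIntegral_apply hF'int v, Lmap_apply]
  -- pointwise value of F' p₀ t at v, for t ∈ [0,1]
  have hval : ∀ t ∈ Set.Icc (0:ℝ) 1, F' p₀ t v =
      v.1 * (P1 f (t • p₀) + t * (DP1 (t • p₀) p₀)) +
      v.2 * (P2 f (t • p₀) + t * (DP2 (t • p₀) p₀)) := by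
    intro t ht
    have hdisk : t • p₀ ∈ Disk := seg_mem_Disk hp₀ ht
    have hclosed : fderiv ℝ (P1 f) (t • p₀) (0,1) = fderiv ℝ (P2 f) (t • p₀) (1,0) :=
      closedness hU hf (hDU hdisk) (harea _ hdisk)
    have hdec1 := clm_decomp (DP1 (t • p₀)) v
    have hdec2 := clm_decomp (DP2 (t • p₀)) v
    have hdecp1 := clm_decomp (DP1 (t • p₀)) p₀
    have hdecp2 := clm_decomp (DP2 (t • p₀)) p₀
    simp only [hF', ContinuousLinearMap.add_apply, ContinuousLinearMap.smul_apply,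
      ContinuousLinearMap.comp_apply, ContinuousLinearMap.coe_fst',
      ContinuousLinearMap.coe_snd', ContinuousLinearMap.coe_id',
      ContinuousLinearMap.map_smul, id_eq, smul_eq_mul]
    rw [hdec1, hdec2] at *
    rw [hdecp1, hdecp2]
    simp only [smul_eq_mul] at *
    rw [hclosed] at *
    ring
  rw [intervalIntegral.integral_congr (g := fun t =>
      v.1 * (P1 f (t • p₀) + t * (DP1 (t • p₀) p₀)) +
      v.2 * (P2 f (t • p₀) + t * (DP2 (t • p₀) p₀)))
    (by intro t ht; rw [uIcc_01] at ht; exact hval t ht)]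
  -- now integrate explicitly using FTC
  have hmap : Set.MapsTo (fun t : ℝ => t • p₀) (Set.Icc (0:ℝ) 1) B :=
    fun t ht => hsmulmem t ht p₀ (Metric.mem_ball_self hε)
  have hco : ContinuousOn (fun t : ℝ => t • p₀) (Set.Icc (0:ℝ) 1) :=
    (continuous_id.smul continuous_const).continuousOn
  have hq1cont : ContinuousOn (fun t : ℝ => P1 f (t • p₀) + t * (DP1 (t • p₀) p₀))
      (Set.Icc (0:ℝ) 1) :=
    (hP1B.continuousOn.comp hco hmap).add (continuousOn_id.mul
      (((hDP1B.comp hco hmap).clm_apply continuousOn_const)))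
  have hq2cont : ContinuousOn (fun t : ℝ => P2 f (t • p₀) + t * (DP2 (t • p₀) p₀))
      (Set.Icc (0:ℝ) 1) :=
    (hP2B.continuousOn.comp hco hmap).add (continuousOn_id.mul
      (((hDP2B.comp hco hmap).clm_apply continuousOn_const)))
  have hq1int : IntervalIntegrable (fun t : ℝ => P1 f (t • p₀) + t * (DP1 (t • p₀) p₀)) volume 0 1 := by
    apply ContinuousOn.intervalIntegrable; rwa [uIcc_01]
  have hq2int : IntervalIntegrable (fun t : ℝ => P2 f (t • p₀) + t * (DP2 (t • p₀) p₀)) volume 0 1 := by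
    apply ContinuousOn.intervalIntegrable; rwa [uIcc_01]
  have hftc1 : (∫ t in (0:ℝ)..1, (P1 f (t • p₀) + t * (DP1 (t • p₀) p₀))) = P1 f p₀ := by
    have hder : ∀ t ∈ Set.uIcc (0:ℝ) 1, HasDerivAt (fun t : ℝ => t * P1 f (t • p₀))
        (P1 f (t • p₀) + t * (DP1 (t • p₀) p₀)) t := by
      intro t ht
      rw [uIcc_01] at ht
      have hcurve : HasDerivAt (fun t : ℝ => t • p₀) p₀ t := by
        simpa using (hasDerivAt_id t).smul_const p₀
      have hP : HasDerivAt (fun t : ℝ => P1 f (t • p₀)) (DP1 (t • p₀) p₀) t :=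
        HasFDerivAt.comp_hasDerivAt (l := P1 f) t (hasFDerivAt_of_contDiffOn hBopen hP1B (hsmulmem t ht p₀ (Metric.mem_ball_self hε))) hcurve
      simpa [Pi.mul_def] using (hasDerivAt_id t).mul hP
    rw [intervalIntegral.integral_eq_sub_of_hasDerivAt hder hq1int]
    simp
  have hftc2 : (∫ t in (0:ℝ)..1, (P2 f (t • p₀) + t * (DP2 (t • p₀) p₀))) = P2 f p₀ := by
    have hder : ∀ t ∈ Set.uIcc (0:ℝ) 1, HasDerivAt (fun t : ℝ => t * P2 f (t • p₀))
        (P2 f (t • p₀) + t * (DP2 (t • p₀) p₀)) t := by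
      intro t ht
      rw [uIcc_01] at ht
      have hcurve : HasDerivAt (fun t : ℝ => t • p₀) p₀ t := by
        simpa using (hasDerivAt_id t).smul_const p₀
      have hP : HasDerivAt (fun t : ℝ => P2 f (t • p₀)) (DP2 (t • p₀) p₀) t :=
        HasFDerivAt.comp_hasDerivAt (l := P2 f) t (hasFDerivAt_of_contDiffOn hBopen hP2B (hsmulmem t ht p₀ (Metric.mem_ball_self hε))) hcurve
      simpa [Pi.mul_def] using (hasDerivAt_id t).mul hP
    rw [intervalIntegral.integral_eq_sub_of_hasDerivAt hder hq2int]
    simp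
  rw [intervalIntegral.integral_add (hq1int.const_mul v.1) (hq2int.const_mul v.2)]
  rw [intervalIntegral.integral_const_mul, intervalIntegral.integral_const_mul, hftc1, hftc2]
  ring

end poincare

section assembly
open ContinuousLinearMap

/-- FTC along the segment: `tau a = Fprim (1,0) - Fprim (0,0)`. -/
lemma tau_eq_sub (a : SympD) : tau a = Fprim a.toFun (1,0) - Fprim a.toFun (0,0) := by
  obtain ⟨U, hU, hDU, hf⟩ := a.smooth
  have hder : ∀ t ∈ Set.uIcc (0:ℝ) 1, HasDerivAt (fun t : ℝ => Fprim a.toFun (t, 0))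
      ((1/2) * ((a.toFun (t,0)).1 * (fderiv ℝ a.toFun (t,0) (1,0)).2
        - (a.toFun (t,0)).2 * (fderiv ℝ a.toFun (t,0) (1,0)).1)) t := by
    intro t ht
    rw [uIcc_01] at ht
    have hdisk : ((t,(0:ℝ)) : ℝ×ℝ) ∈ Disk := by
      show t^2 + (0:ℝ)^2 ≤ 1
      nlinarith [ht.1, ht.2]
    have hcurve : HasDerivAt (fun t : ℝ => ((t,(0:ℝ)) : ℝ×ℝ)) (1,0) t :=
      HasDerivAt.prodMk (hasDerivAt_id t) (hasDerivAt_const t 0)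
    have hmain := (hasFDerivAt_Fprim hU hDU hf a.areaPreserving hdisk).comp_hasDerivAt t hcurve
    refine hmain.congr_deriv ?_
    rw [Lmap_apply]
    simp [P1, P2]
  have hcont : ContinuousOn (fun t : ℝ => (1/2) * ((a.toFun (t,0)).1 * (fderiv ℝ a.toFun (t,0) (1,0)).2
      - (a.toFun (t,0)).2 * (fderiv ℝ a.toFun (t,0) (1,0)).1)) (Set.Icc (0:ℝ) 1) := by
    have hmapsTo : Set.MapsTo (fun t : ℝ => ((t,(0:ℝ)) : ℝ×ℝ)) (Set.Icc (0:ℝ) 1) U := by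
      intro t ht
      apply hDU
      show t^2 + (0:ℝ)^2 ≤ 1
      nlinarith [ht.1, ht.2]
    have hcur : ContinuousOn (fun t : ℝ => ((t,(0:ℝ)) : ℝ×ℝ)) (Set.Icc (0:ℝ) 1) :=
      (continuous_id.prodMk continuous_const).continuousOn
    have hfc : ContinuousOn a.toFun U := hf.continuousOn
    have hdc : ContinuousOn (fun p => fderiv ℝ a.toFun p (1,0)) U :=
      (hf.continuousOn_fderiv_of_isOpen hU (by exact_mod_cast le_top)).clm_apply continuousOn_const
    exact continuousOn_const.mul
      ((((hfc.comp hcur hmapsTo).fst).mul ((hdc.comp hcur hmapsTo).snd)).sub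
        (((hfc.comp hcur hmapsTo).snd).mul ((hdc.comp hcur hmapsTo).fst)))
  have hint : IntervalIntegrable (fun t : ℝ => (1/2) * ((a.toFun (t,0)).1 * (fderiv ℝ a.toFun (t,0) (1,0)).2
      - (a.toFun (t,0)).2 * (fderiv ℝ a.toFun (t,0) (1,0)).1)) volume 0 1 := by
    apply ContinuousOn.intervalIntegrable; rwa [uIcc_01]
  exact intervalIntegral.integral_eq_sub_of_hasDerivAt hder hint

lemma sq_norm_cossin (θ : ℝ) : ((Real.cos θ, Real.sin θ) : ℝ×ℝ) ∈ Bdry := by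
  show (Real.cos θ)^2 + (Real.sin θ)^2 = 1
  rw [add_comm]
  exact Real.sin_sq_add_cos_sq θ

lemma exists_angle {q : ℝ×ℝ} (hq : q ∈ Bdry) : ∃ θ : ℝ, q = (Real.cos θ, Real.sin θ) := by
  have h1 : q.1^2 + q.2^2 = 1 := hq
  have hm : -1 ≤ q.1 := by nlinarith [sq_nonneg q.2]
  have hM : q.1 ≤ 1 := by nlinarith [sq_nonneg q.2]
  have hsq : Real.sqrt (1 - q.1^2) = |q.2| := by
    rw [show 1 - q.1^2 = q.2^2 by linarith]
    exact Real.sqrt_sq_eq_abs q.2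
  by_cases h2 : 0 ≤ q.2
  · refine ⟨Real.arccos q.1, ?_⟩
    have : Real.sin (Real.arccos q.1) = q.2 := by
      rw [Real.sin_arccos, hsq, abs_of_nonneg h2]
    ext
    · simp [Real.cos_arccos hm hM]
    · simp [this]
  · refine ⟨-Real.arccos q.1, ?_⟩
    push_neg at h2
    have : Real.sin (-Real.arccos q.1) = q.2 := by
      rw [Real.sin_neg, Real.sin_arccos, hsq, abs_of_neg h2]
      ring
    ext
    · simp [Real.cos_arccos hm hM]
    · simp [this]

/-- `F_h` is constant on the boundary circle when `h` is the identity there. -/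
lemma Fprim_bdry_const (h : SympD) (hrel : IsRel h) {q : ℝ×ℝ} (hq : q ∈ Bdry) :
    Fprim h.toFun q = Fprim h.toFun (1,0) := by
  obtain ⟨U, hU, hDU, hf⟩ := h.smooth
  have hψ : ∀ θ : ℝ, HasDerivAt (fun θ : ℝ => Fprim h.toFun (Real.cos θ, Real.sin θ)) 0 θ := by
    intro θ
    set p : ℝ×ℝ := (Real.cos θ, Real.sin θ) with hp
    have hpB : p ∈ Bdry := sq_norm_cossin θ
    have hpD : p ∈ Disk := Bdry_subset_Disk hpB
    have hcurve : HasDerivAt (fun θ : ℝ => ((Real.cos θ, Real.sin θ) : ℝ×ℝ))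
        (-Real.sin θ, Real.cos θ) θ :=
      HasDerivAt.prodMk (Real.hasDerivAt_cos θ) (Real.hasDerivAt_sin θ)
    have hmain := (hasFDerivAt_Fprim hU hDU hf h.areaPreserving hpD).comp_hasDerivAt θ hcurve
    -- the tangent vector is fixed by the derivative of h
    have hcomp : HasDerivAt (fun θ : ℝ => h.toFun (Real.cos θ, Real.sin θ))
        (fderiv ℝ h.toFun p (-Real.sin θ, Real.cos θ)) θ :=
      (hasFDerivAt_of_contDiffOn hU hf (hDU hpD)).comp_hasDerivAt θ hcurve
    have hfun : (fun θ : ℝ => h.toFun (Real.cos θ, Real.sin θ))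
        = (fun θ : ℝ => ((Real.cos θ, Real.sin θ) : ℝ×ℝ)) :=
      funext fun θ => hrel _ (sq_norm_cossin θ)
    rw [hfun] at hcomp
    have hval : fderiv ℝ h.toFun p (-Real.sin θ, Real.cos θ) = (-Real.sin θ, Real.cos θ) :=
      hcomp.unique hcurve
    have hdec := clm_decomp (fderiv ℝ h.toFun p) (-Real.sin θ, Real.cos θ)
    rw [hval] at hdec
    have hc1 : -Real.sin θ = -Real.sin θ * (fderiv ℝ h.toFun p (1,0)).1
        + Real.cos θ * (fderiv ℝ h.toFun p (0,1)).1 := by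
      have := congrArg Prod.fst hdec
      simpa using this
    have hc2 : Real.cos θ = -Real.sin θ * (fderiv ℝ h.toFun p (1,0)).2
        + Real.cos θ * (fderiv ℝ h.toFun p (0,1)).2 := by
      have := congrArg Prod.snd hdec
      simpa using this
    have hhp : h.toFun p = p := hrel _ hpB
    have hzero : Lmap h.toFun p (-Real.sin θ, Real.cos θ) = 0 := by
      rw [Lmap_apply, P1, P2, hhp]
      have hpyth : Real.sin θ ^ 2 + Real.cos θ ^ 2 = 1 := Real.sin_sq_add_cos_sq θ
      show (1/2 * (p.1 * (fderiv ℝ h.toFun p (1,0)).2 - p.2 * (fderiv ℝ h.toFun p (1,0)).1)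
          + 1/2 * p.2) * (-Real.sin θ)
        + (1/2 * (p.1 * (fderiv ℝ h.toFun p (0,1)).2 - p.2 * (fderiv ℝ h.toFun p (0,1)).1)
          - 1/2 * p.1) * (Real.cos θ) = 0
      have hp1 : p.1 = Real.cos θ := rfl
      have hp2 : p.2 = Real.sin θ := rfl
      rw [hp1, hp2]
      linear_combination (1/2) * Real.sin θ * hc1 - (1/2) * Real.cos θ * hc2
    rw [hzero] at hmain
    exact hmain
  have hconst : ∀ θ₁ θ₂ : ℝ, Fprim h.toFun (Real.cos θ₁, Real.sin θ₁)
      = Fprim h.toFun (Real.cos θ₂, Real.sin θ₂) := by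
    intro θ₁ θ₂
    exact is_const_of_deriv_eq_zero (𝕜 := ℝ) (fun θ => (hψ θ).differentiableAt)
      (fun θ => (hψ θ).deriv) θ₁ θ₂
  obtain ⟨θ₀, hθ₀⟩ := exists_angle hq
  rw [hθ₀]
  have := hconst θ₀ 0
  simpa using this

/-- `det` of a continuous linear map with a (pointwise) left inverse is nonzero. -/
lemma det_ne_zero_of_comp_id {J K : (ℝ×ℝ) →L[ℝ] (ℝ×ℝ)} (hcomp : ∀ v, K (J v) = v) :
    J.det ≠ 0 := by
  have h1 : (K : (ℝ×ℝ) →ₗ[ℝ] (ℝ×ℝ)) ∘ₗ (J : (ℝ×ℝ) →ₗ[ℝ] (ℝ×ℝ)) = LinearMap.id :=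
    LinearMap.ext fun v => hcomp v
  have h2 := LinearMap.det_comp (K : (ℝ×ℝ) →ₗ[ℝ] (ℝ×ℝ)) (J : (ℝ×ℝ) →ₗ[ℝ] (ℝ×ℝ))
  rw [h1, LinearMap.det_id] at h2
  intro h0
  have : LinearMap.det (J : (ℝ×ℝ) →ₗ[ℝ] (ℝ×ℝ)) = 0 := h0
  rw [this, mul_zero] at h2
  exact one_ne_zero h2

lemma bdry_not_mem_nhds {q : ℝ×ℝ} (hq : q ∈ Bdry) : Disk ∉ nhds q := by
  intro hmem
  obtain ⟨δ, hδ, hball⟩ := Metric.mem_nhds_iff.mp hmem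
  have h1 : q.1^2 + q.2^2 = 1 := hq
  set r : ℝ := min (δ/2) 1 with hr
  have hr0 : 0 < r := by
    apply lt_min (by linarith) one_pos
  have hr1 : r ≤ 1 := min_le_right _ _
  have hrδ : r < δ := lt_of_le_of_lt (min_le_left _ _) (by linarith)
  have hqn : ‖q‖ ≤ 1 := by
    rw [Prod.norm_def]
    apply max_le <;> rw [Real.norm_eq_abs, abs_le] <;> constructor <;> nlinarith
  have hq' : (1 + r) • q ∈ Metric.ball q δ := by
    rw [Metric.mem_ball, dist_eq_norm]
    have : (1 + r) • q - q = r • q := by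
      rw [add_smul, one_smul]; abel
    rw [this, norm_smul, Real.norm_eq_abs, abs_of_pos hr0]
    calc r * ‖q‖ ≤ r * 1 := by nlinarith
    _ < δ := by linarith
  have := hball hq'
  have hcon : ((1+r) • q).1 ^ 2 + ((1+r) • q).2 ^ 2 ≤ 1 := this
  have e1 : ((1+r) • q).1 = (1+r) * q.1 := rfl
  have e2 : ((1+r) • q).2 = (1+r) * q.2 := rfl
  rw [e1, e2] at hcon
  have key : (1+r)^2 * (q.1^2 + q.2^2) ≤ 1 := by nlinarith [hcon]
  rw [h1, mul_one] at key
  nlinarith [hr0]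

/-- the derivative of `toFun` at any point of the disk is invertible -/
lemma toFun_fderiv_det (a : SympD) {p : ℝ×ℝ} (hp : p ∈ Disk) :
    (fderiv ℝ a.toFun p).det ≠ 0 := by
  set L := fderiv ℝ a.toFun p with hL
  set A : ℝ := (L (1,0)).1
  set C : ℝ := (L (1,0)).2
  set B : ℝ := (L (0,1)).1
  set D : ℝ := (L (0,1)).2
  have harea : A * D - B * C = 1 := a.areaPreserving p hp
  set K : (ℝ×ℝ) →L[ℝ] (ℝ×ℝ) :=
    (D • fst ℝ ℝ ℝ - B • snd ℝ ℝ ℝ).prod ((-C) • fst ℝ ℝ ℝ + A • snd ℝ ℝ ℝ) with hKdef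
  apply det_ne_zero_of_comp_id (K := K)
  intro v
  have hdec := clm_decomp L v
  have hv1 : (L v).1 = v.1 * A + v.2 * B := by
    rw [hdec]; simp [A, B]
  have hv2 : (L v).2 = v.1 * C + v.2 * D := by
    rw [hdec]; simp [C, D]
  have hKv : K (L v) = (D * (L v).1 - B * (L v).2, -C * (L v).1 + A * (L v).2) := by
    simp [hKdef]
  have e1 : D * (v.1 * A + v.2 * B) - B * (v.1 * C + v.2 * D) = v.1 := by
    linear_combination v.1 * harea
  have e2 : -C * (v.1 * A + v.2 * B) + A * (v.1 * C + v.2 * D) = v.2 := by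
    linear_combination v.2 * harea
  rw [hKv, hv1, hv2, e1, e2]

lemma mapsTo_int_toFun (a : SympD) {p : ℝ×ℝ} (hp : p ∈ IntD) : a.toFun p ∈ IntD := by
  obtain ⟨U, hU, hDU, hf⟩ := a.smooth
  have hpD : p ∈ Disk := IntD_subset_Disk hp
  have hstrict : HasStrictFDerivAt a.toFun (fderiv ℝ a.toFun p) p :=
    (hf.contDiffAt (hU.mem_nhds (hDU hpD))).hasStrictFDerivAt (by simp)
  set E := (fderiv ℝ a.toFun p).toContinuousLinearEquivOfDetNeZero (toFun_fderiv_det a hpD)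
  have hstrict' : HasStrictFDerivAt a.toFun (E : (ℝ×ℝ) →L[ℝ] (ℝ×ℝ)) p := by
    rwa [ContinuousLinearMap.coe_toContinuousLinearEquivOfDetNeZero]
  have hmap := hstrict'.map_nhds_eq_of_equiv
  have hnhds : Disk ∈ nhds (a.toFun p) := by
    rw [← hmap]
    exact Filter.mem_map.mpr (Filter.mem_of_superset (disk_mem_nhds hp)
      (fun x hx => a.mapsTo hx))
  rcases mem_IntD_or_Bdry (a.mapsTo hpD) with h | h
  · exact h
  · exact absurd hnhds (bdry_not_mem_nhds h)

lemma mapsTo_int_invFun (a : SympD) {q : ℝ×ℝ} (hq : q ∈ IntD) : a.invFun q ∈ IntD := by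
  obtain ⟨U, hU, hDU, hfi⟩ := a.invSmooth
  obtain ⟨V, hV, hDV, hft⟩ := a.smooth
  have hqD : q ∈ Disk := IntD_subset_Disk hq
  have hwD : a.invFun q ∈ Disk := a.invMapsTo hqD
  have hJ : HasFDerivAt a.invFun (fderiv ℝ a.invFun q) q :=
    hasFDerivAt_of_contDiffOn hU hfi (hDU hqD)
  have hK : HasFDerivAt a.toFun (fderiv ℝ a.toFun (a.invFun q)) (a.invFun q) :=
    hasFDerivAt_of_contDiffOn hV hft (hDV hwD)
  have hcomp : HasFDerivAt (a.toFun ∘ a.invFun)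
      ((fderiv ℝ a.toFun (a.invFun q)).comp (fderiv ℝ a.invFun q)) q := hK.comp q hJ
  have hid : HasFDerivAt (a.toFun ∘ a.invFun)
      (ContinuousLinearMap.id ℝ (ℝ×ℝ)) q := by
    apply (hasFDerivAt_id q).congr_of_eventuallyEq
    filter_upwards [disk_mem_nhds hq] with x hx
    show (a.toFun ∘ a.invFun) x = id x
    simp only [Function.comp_apply, id_eq]
    exact a.rightInv x hx
  have huniq := hcomp.unique hid
  have hdet : (fderiv ℝ a.invFun q).det ≠ 0 := by
    apply det_ne_zero_of_comp_id (K := fderiv ℝ a.toFun (a.invFun q))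
    intro v
    have := congrArg (fun (L : (ℝ×ℝ) →L[ℝ] (ℝ×ℝ)) => L v) huniq
    simpa using this
  have hstrict : HasStrictFDerivAt a.invFun (fderiv ℝ a.invFun q) q :=
    (hfi.contDiffAt (hU.mem_nhds (hDU hqD))).hasStrictFDerivAt (by simp)
  set E := (fderiv ℝ a.invFun q).toContinuousLinearEquivOfDetNeZero hdet
  have hstrict' : HasStrictFDerivAt a.invFun (E : (ℝ×ℝ) →L[ℝ] (ℝ×ℝ)) q := by
    rwa [ContinuousLinearMap.coe_toContinuousLinearEquivOfDetNeZero]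
  have hmap := hstrict'.map_nhds_eq_of_equiv
  have hnhds : Disk ∈ nhds (a.invFun q) := by
    rw [← hmap]
    exact Filter.mem_map.mpr (Filter.mem_of_superset (disk_mem_nhds hq)
      (fun x hx => a.invMapsTo hx))
  rcases mem_IntD_or_Bdry hwD with h | h
  · exact h
  · exact absurd hnhds (bdry_not_mem_nhds h)

lemma invFun_bdry (a : SympD) {q : ℝ×ℝ} (hq : q ∈ Bdry) : a.invFun q ∈ Bdry := by
  have hqD : q ∈ Disk := Bdry_subset_Disk hq
  rcases mem_IntD_or_Bdry (a.invMapsTo hqD) with h | h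
  · exfalso
    have := mapsTo_int_toFun a h
    rw [a.rightInv q hqD] at this
    have h1 : q.1^2 + q.2^2 < 1 := this
    have h2 : q.1^2 + q.2^2 = 1 := hq
    linarith
  · exact h

end assembly
section final
open ContinuousLinearMap

lemma Lmap_apply' (f : ℝ×ℝ → ℝ×ℝ) (q v : ℝ×ℝ) :
    Lmap f q v = (1/2) * ((f q).1 * (fderiv ℝ f q v).2 - (f q).2 * (fderiv ℝ f q v).1)
      - (1/2) * (q.1 * v.2 - q.2 * v.1) := by
  rw [Lmap_apply, P1, P2, clm_decomp (fderiv ℝ f q) v]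
  simp only [Prod.fst_add, Prod.snd_add, Prod.smul_fst, Prod.smul_snd, smul_eq_mul]
  ring

/-- at interior points, `D(toFun)(invFun q) ∘ D(invFun)(q) = id` -/
lemma fderiv_toFun_comp_invFun (a : SympD) {q : ℝ×ℝ} (hq : q ∈ IntD) (v : ℝ×ℝ) :
    fderiv ℝ a.toFun (a.invFun q) (fderiv ℝ a.invFun q v) = v := by
  obtain ⟨U, hU, hDU, hfi⟩ := a.invSmooth
  obtain ⟨V, hV, hDV, hft⟩ := a.smooth
  have hqD : q ∈ Disk := IntD_subset_Disk hq
  have hwD : a.invFun q ∈ Disk := a.invMapsTo hqD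
  have hJ : HasFDerivAt a.invFun (fderiv ℝ a.invFun q) q :=
    hasFDerivAt_of_contDiffOn hU hfi (hDU hqD)
  have hK : HasFDerivAt a.toFun (fderiv ℝ a.toFun (a.invFun q)) (a.invFun q) :=
    hasFDerivAt_of_contDiffOn hV hft (hDV hwD)
  have hcomp : HasFDerivAt (a.toFun ∘ a.invFun)
      ((fderiv ℝ a.toFun (a.invFun q)).comp (fderiv ℝ a.invFun q)) q := hK.comp q hJ
  have hid : HasFDerivAt (a.toFun ∘ a.invFun) (ContinuousLinearMap.id ℝ (ℝ×ℝ)) q := by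
    apply (hasFDerivAt_id q).congr_of_eventuallyEq
    filter_upwards [disk_mem_nhds hq] with x hx
    show (a.toFun ∘ a.invFun) x = id x
    simp only [Function.comp_apply, id_eq]
    exact a.rightInv x hx
  have huniq := hcomp.unique hid
  have := congrArg (fun (L : (ℝ×ℝ) →L[ℝ] (ℝ×ℝ)) => L v) huniq
  simpa using this

lemma origin_invFun (a : SympD) (ha : FixesOrigin a) : a.invFun (0,0) = (0,0) := by
  have := a.leftInv (0,0) zero_mem_Disk
  rw [ha] at this
  exact this

lemma bdry_invFun_id (a : SympD) (ha : IsRel a) {q : ℝ×ℝ} (hq : q ∈ Bdry) :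
    a.invFun q = q := by
  have := a.leftInv q (Bdry_subset_Disk hq)
  rw [ha q hq] at this
  exact this

/-- the function `F_c - (F_g∘hg⁻¹h⁻¹ - F_g∘g⁻¹h⁻¹ + F_h∘g⁻¹h⁻¹ - F_h∘h⁻¹)` has zero
derivative at interior points -/
lemma commutator_diff_deriv (g h c : SympD)
    (hc : ∀ p ∈ Disk, c.toFun p = g.toFun (h.toFun (g.invFun (h.invFun p))))
    {p : ℝ×ℝ} (hp : p ∈ IntD) :
    HasFDerivAt (fun x => Fprim c.toFun x -
      (Fprim g.toFun (h.toFun (g.invFun (h.invFun x)))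
        - Fprim g.toFun (g.invFun (h.invFun x))
        + Fprim h.toFun (g.invFun (h.invFun x))
        - Fprim h.toFun (h.invFun x))) (0 : (ℝ×ℝ) →L[ℝ] ℝ) p := by
  obtain ⟨Ug, hUg, hDUg, hfg⟩ := g.smooth
  obtain ⟨Vg, hVg, hDVg, hfgi⟩ := g.invSmooth
  obtain ⟨Uh, hUh, hDUh, hfh⟩ := h.smooth
  obtain ⟨Vh, hVh, hDVh, hfhi⟩ := h.invSmooth
  obtain ⟨Uc, hUc, hDUc, hfc⟩ := c.smooth
  have hpD : p ∈ Disk := IntD_subset_Disk hp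
  -- the four intermediate points
  set u : ℝ×ℝ := h.invFun p with hu
  set w : ℝ×ℝ := g.invFun u with hw
  set z : ℝ×ℝ := h.toFun w with hz
  have huI : u ∈ IntD := mapsTo_int_invFun h hp
  have hwI : w ∈ IntD := mapsTo_int_invFun g huI
  have hzI : z ∈ IntD := mapsTo_int_toFun h hwI
  have huD : u ∈ Disk := IntD_subset_Disk huI
  have hwD : w ∈ Disk := IntD_subset_Disk hwI
  have hzD : z ∈ Disk := IntD_subset_Disk hzI
  -- derivatives of the four maps
  have k1 : HasFDerivAt h.invFun (fderiv ℝ h.invFun p) p :=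
    hasFDerivAt_of_contDiffOn hVh hfhi (hDVh hpD)
  have k2' : HasFDerivAt g.invFun (fderiv ℝ g.invFun u) u :=
    hasFDerivAt_of_contDiffOn hVg hfgi (hDVg huD)
  have k3' : HasFDerivAt h.toFun (fderiv ℝ h.toFun w) w :=
    hasFDerivAt_of_contDiffOn hUh hfh (hDUh hwD)
  have k4' : HasFDerivAt g.toFun (fderiv ℝ g.toFun z) z :=
    hasFDerivAt_of_contDiffOn hUg hfg (hDUg hzD)
  have k2 := k2'.comp p k1
  have k3 := k3'.comp p k2
  have k4 := k4'.comp p k3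
  -- derivative of c at p
  have hcC : HasFDerivAt c.toFun
      ((fderiv ℝ g.toFun z).comp ((fderiv ℝ h.toFun w).comp
        ((fderiv ℝ g.invFun u).comp (fderiv ℝ h.invFun p)))) p := by
    apply k4.congr_of_eventuallyEq
    filter_upwards [disk_mem_nhds hp] with x hx
    exact hc x hx
  -- primitives, with their derivatives
  have Hc : HasFDerivAt (Fprim c.toFun) (Lmap c.toFun p) p :=
    hasFDerivAt_Fprim hUc hDUc hfc c.areaPreserving hpD
  have Hgz : HasFDerivAt (Fprim g.toFun) (Lmap g.toFun z) z :=
    hasFDerivAt_Fprim hUg hDUg hfg g.areaPreserving hzD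
  have Hgw : HasFDerivAt (Fprim g.toFun) (Lmap g.toFun w) w :=
    hasFDerivAt_Fprim hUg hDUg hfg g.areaPreserving hwD
  have Hhw : HasFDerivAt (Fprim h.toFun) (Lmap h.toFun w) w :=
    hasFDerivAt_Fprim hUh hDUh hfh h.areaPreserving hwD
  have Hhu : HasFDerivAt (Fprim h.toFun) (Lmap h.toFun u) u :=
    hasFDerivAt_Fprim hUh hDUh hfh h.areaPreserving huD
  have t1 := Hgz.comp p k3
  have t2 := Hgw.comp p k2
  have t3 := Hhw.comp p k2
  have t4 := Hhu.comp p k1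
  have GG := Hc.sub (((t1.sub t2).add t3).sub t4)
  have hzero : Lmap c.toFun p -
      (((Lmap g.toFun z).comp ((fderiv ℝ h.toFun w).comp ((fderiv ℝ g.invFun u).comp (fderiv ℝ h.invFun p)))
        - (Lmap g.toFun w).comp ((fderiv ℝ g.invFun u).comp (fderiv ℝ h.invFun p)))
        + (Lmap h.toFun w).comp ((fderiv ℝ g.invFun u).comp (fderiv ℝ h.invFun p))
        - (Lmap h.toFun u).comp (fderiv ℝ h.invFun p)) = 0 := by
    apply ContinuousLinearMap.ext
    intro v
    set v1 : ℝ×ℝ := fderiv ℝ h.invFun p v with hv1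
    set v2 : ℝ×ℝ := fderiv ℝ g.invFun u v1 with hv2
    set v3 : ℝ×ℝ := fderiv ℝ h.toFun w v2 with hv3
    -- identities
    have idh : fderiv ℝ h.toFun u v1 = v := fderiv_toFun_comp_invFun h hp v
    have idg : fderiv ℝ g.toFun w v2 = v1 := fderiv_toFun_comp_invFun g huI v1
    have hgw : g.toFun w = u := g.rightInv u huD
    have hhu : h.toFun u = p := h.rightInv p hpD
    have hcp : c.toFun p = g.toFun z := hc p hpD
    have hdc : fderiv ℝ c.toFun p v = fderiv ℝ g.toFun z v3 := by
      rw [hcC.fderiv]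
      simp only [ContinuousLinearMap.comp_apply]
      rfl
    simp only [ContinuousLinearMap.sub_apply, ContinuousLinearMap.add_apply,
      ContinuousLinearMap.comp_apply, ContinuousLinearMap.zero_apply]
    rw [Lmap_apply' c.toFun p v, Lmap_apply' g.toFun z, Lmap_apply' g.toFun w,
      Lmap_apply' h.toFun w, Lmap_apply' h.toFun u]
    rw [hdc, hcp, hgw, hhu, idg]
    have idh' : fderiv ℝ h.toFun u (fderiv ℝ h.invFun p v) = v := idh
    rw [idh']
    ring
  rw [hzero] at GG
  exact GG

end final
lemma contAt_toFun (a : SympD) {x : ℝ×ℝ} (hx : x ∈ Disk) : ContinuousAt a.toFun x := by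
  obtain ⟨U, hU, hDU, hf⟩ := a.smooth
  exact (hf.contDiffAt (hU.mem_nhds (hDU hx))).continuousAt

lemma contAt_invFun (a : SympD) {x : ℝ×ℝ} (hx : x ∈ Disk) : ContinuousAt a.invFun x := by
  obtain ⟨U, hU, hDU, hf⟩ := a.invSmooth
  exact (hf.contDiffAt (hU.mem_nhds (hDU hx))).continuousAt

lemma contAt_Fprim (a : SympD) {x : ℝ×ℝ} (hx : x ∈ Disk) : ContinuousAt (Fprim a.toFun) x := by
  obtain ⟨U, hU, hDU, hf⟩ := a.smooth
  exact (hasFDerivAt_Fprim hU hDU hf a.areaPreserving hx).continuousAt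

end FluxAux

/-- the flux extension is central: for `g ∈ G` and `h ∈ G_rel`, the
commutator `g ∘ h ∘ g⁻¹ ∘ h⁻¹` lies in `G_rel` and has vanishing flux; equivalently,
the image of `G_rel/K` lies in the center of `G/K`. -/
theorem flux_extension_central (g h c : SympD) (hg : FixesOrigin g) (hh : IsGrel h)
    (hc : ∀ p ∈ Disk, c.toFun p = g.toFun (h.toFun (g.invFun (h.invFun p)))) :
    IsGrel c ∧ tau c = 0 := by
  obtain ⟨hh0, hhrel⟩ := hh
  have hhi0 : h.invFun (0,0) = (0,0) := FluxAux.origin_invFun h hh0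
  have hgi0 : g.invFun (0,0) = (0,0) := FluxAux.origin_invFun g hg
  have hfix : FixesOrigin c := by
    rw [FixesOrigin, hc _ FluxAux.zero_mem_Disk, hhi0, hgi0, hh0, hg]
  have hrelc : IsRel c := by
    intro q hq
    have h1 : h.invFun q = q := FluxAux.bdry_invFun_id h hhrel hq
    have h2 : g.invFun q ∈ Bdry := FluxAux.invFun_bdry g hq
    rw [hc q (FluxAux.Bdry_subset_Disk hq), h1, hhrel _ h2,
      g.rightInv q (FluxAux.Bdry_subset_Disk hq)]
  refine ⟨⟨hfix, hrelc⟩, ?_⟩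
  set Fc : ℝ×ℝ → ℝ := FluxAux.Fprim c.toFun with hFc
  set Gf : ℝ×ℝ → ℝ := fun x =>
      FluxAux.Fprim g.toFun (h.toFun (g.invFun (h.invFun x)))
        - FluxAux.Fprim g.toFun (g.invFun (h.invFun x))
        + FluxAux.Fprim h.toFun (g.invFun (h.invFun x))
        - FluxAux.Fprim h.toFun (h.invFun x) with hGf
  set D : ℝ×ℝ → ℝ := fun x => Fc x - Gf x with hD
  -- D is constant on the open disk
  have hDconst : ∀ x ∈ FluxAux.IntD, ∀ y ∈ FluxAux.IntD, D x = D y := by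
    intro x hx y hy
    have hder : ∀ zz ∈ FluxAux.IntD, HasFDerivWithinAt D (0 : (ℝ×ℝ)→L[ℝ]ℝ) FluxAux.IntD zz :=
      fun zz hz => (FluxAux.commutator_diff_deriv g h c hc hz).hasFDerivWithinAt
    have hbd := FluxAux.convex_IntD.norm_image_sub_le_of_norm_hasFDerivWithin_le
      (f' := fun _ => (0:(ℝ×ℝ)→L[ℝ]ℝ)) (C := 0) hder (fun zz _ => le_of_eq norm_zero) hy hx
    have h0 : ‖D x - D y‖ ≤ 0 := by simpa using hbd
    have h00 : D x - D y = 0 := norm_le_zero_iff.mp h0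
    linarith
  -- continuity of D at (1,0)
  have h10D : ((1:ℝ),(0:ℝ)) ∈ Disk := FluxAux.one_zero_mem_Disk
  have hu0D : h.invFun (1,0) ∈ Disk := h.invMapsTo h10D
  have hw0D : g.invFun (h.invFun (1,0)) ∈ Disk := g.invMapsTo hu0D
  have hz0D : h.toFun (g.invFun (h.invFun (1,0))) ∈ Disk := h.mapsTo hw0D
  have hcGf : ContinuousAt Gf (1,0) := by
    have c1 : ContinuousAt h.invFun (1,0) := FluxAux.contAt_invFun h h10D
    have c2 : ContinuousAt (fun x => g.invFun (h.invFun x)) (1,0) :=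
      ContinuousAt.comp (f := h.invFun) (FluxAux.contAt_invFun g hu0D) c1
    have c3 : ContinuousAt (fun x => h.toFun (g.invFun (h.invFun x))) (1,0) :=
      ContinuousAt.comp (f := fun x => g.invFun (h.invFun x))
        (FluxAux.contAt_toFun h hw0D) c2
    have d1 : ContinuousAt (fun x => FluxAux.Fprim g.toFun (h.toFun (g.invFun (h.invFun x)))) (1,0) :=
      ContinuousAt.comp (f := fun x => h.toFun (g.invFun (h.invFun x)))
        (FluxAux.contAt_Fprim g hz0D) c3
    have d2 : ContinuousAt (fun x => FluxAux.Fprim g.toFun (g.invFun (h.invFun x))) (1,0) :=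
      ContinuousAt.comp (f := fun x => g.invFun (h.invFun x))
        (FluxAux.contAt_Fprim g hw0D) c2
    have d3 : ContinuousAt (fun x => FluxAux.Fprim h.toFun (g.invFun (h.invFun x))) (1,0) :=
      ContinuousAt.comp (f := fun x => g.invFun (h.invFun x))
        (FluxAux.contAt_Fprim h hw0D) c2
    have d4 : ContinuousAt (fun x => FluxAux.Fprim h.toFun (h.invFun x)) (1,0) :=
      ContinuousAt.comp (f := h.invFun) (FluxAux.contAt_Fprim h hu0D) c1
    exact ((d1.sub d2).add d3).sub d4
  have hcD : ContinuousAt D (1,0) := (FluxAux.contAt_Fprim c h10D).sub hcGf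
  -- sequence inside the open disk converging to (1,0)
  have hDval : D (1,0) = D (0,0) := by
    set xs : ℕ → ℝ×ℝ := fun n => (1 - 1/((n:ℝ)+1)) • ((1:ℝ),(0:ℝ)) with hxs
    have hxsI : ∀ n, xs n ∈ FluxAux.IntD := by
      intro n
      have hn1 : (0:ℝ) < 1/((n:ℝ)+1) := by positivity
      have hn2 : 1/((n:ℝ)+1) ≤ 1 := by
        rw [div_le_one (by positivity)]
        linarith [Nat.cast_nonneg (α := ℝ) n]
      show ((xs n).1)^2 + ((xs n).2)^2 < 1
      have e1 : (xs n).1 = (1 - 1/((n:ℝ)+1)) * 1 := rfl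
      have e2 : (xs n).2 = (1 - 1/((n:ℝ)+1)) * 0 := rfl
      rw [e1, e2]
      nlinarith
    have hxslim : Filter.Tendsto xs Filter.atTop (nhds ((1:ℝ),(0:ℝ))) := by
      have h1 : Filter.Tendsto (fun n : ℕ => 1 - 1/((n:ℝ)+1)) Filter.atTop (nhds 1) := by
        have := tendsto_one_div_add_atTop_nhds_zero_nat (𝕜 := ℝ)
        have h2 := this.const_sub 1
        simpa using h2
      have h2 := h1.smul_const ((1:ℝ),(0:ℝ))
      rw [one_smul] at h2
      exact h2
    have hseq : Filter.Tendsto (fun n => D (xs n)) Filter.atTop (nhds (D (1,0))) :=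
      (hcD.tendsto).comp hxslim
    have hconst : (fun n => D (xs n)) = fun _ => D (0,0) :=
      funext fun n => hDconst (xs n) (hxsI n) (0,0) FluxAux.zero_mem_IntD
    rw [hconst] at hseq
    exact tendsto_nhds_unique hseq tendsto_const_nhds
  -- boundary values of Gf
  have hGf0 : Gf (0,0) = 0 := by
    rw [hGf]
    simp only
    rw [hhi0, hgi0, hh0]
    ring
  have hGf1 : Gf (1,0) = 0 := by
    have hu0 : h.invFun (1,0) = (1,0) := FluxAux.bdry_invFun_id h hhrel FluxAux.one_zero_mem_Bdry
    have hq0 : g.invFun (1,0) ∈ Bdry := FluxAux.invFun_bdry g FluxAux.one_zero_mem_Bdry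
    have hhq0 : h.toFun (g.invFun (1,0)) = g.invFun (1,0) := hhrel _ hq0
    have hFh : FluxAux.Fprim h.toFun (g.invFun (1,0)) = FluxAux.Fprim h.toFun (1,0) :=
      FluxAux.Fprim_bdry_const h hhrel hq0
    rw [hGf]
    simp only
    rw [hu0, hhq0, hFh]
    ring
  -- conclude
  have htau : tau c = Fc (1,0) - Fc (0,0) := FluxAux.tau_eq_sub c
  have hFcsplit : ∀ x, Fc x = D x + Gf x := by
    intro x
    rw [hD]
    ring
  rw [htau, hFcsplit (1,0), hFcsplit (0,0), hDval, hGf1, hGf0]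
  ring
end
end

section
/- The curvature of τ is basic over Diff₊(S¹): if g, g', h, h' ∈ G satisfy g|_{∂D} = g'|_{∂D} and h|_{∂D} = h'|_{∂D}, then τ(g ∘ h) − τ(g) − τ(h) = τ(g' ∘ h') − τ(g') − τ(h'). (This, together with the explicit formula ½(φ(ψ(0)) − φ(0) − ψ(0)) in terms of lifts, expresses the fact that the Euler class e(G/K) of the flux extension equals π·e_ℝ.) -/
open MeasureTheory

noncomputable section

namespace DTBaux

open Set Filter

lemma openDisk_subset : {p : ℝ × ℝ | p.1 ^ 2 + p.2 ^ 2 < 1} ⊆ Disk := fun p hp => show p.1 ^ 2 + p.2 ^ 2 ≤ 1 from le_of_lt hp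

lemma isOpen_openDisk : IsOpen {p : ℝ × ℝ | p.1 ^ 2 + p.2 ^ 2 < 1} :=
  isOpen_lt (by fun_prop) continuous_const

lemma disk_mem_nhds {p : ℝ × ℝ} (hp : p.1 ^ 2 + p.2 ^ 2 < 1) : Disk ∈ nhds p :=
  Filter.mem_of_superset (isOpen_openDisk.mem_nhds hp) openDisk_subset

lemma not_disk_nhds {p : ℝ × ℝ} (hp : p ∈ Bdry) : ¬ Disk ∈ nhds p := by
  intro hmem
  have hcont : Filter.Tendsto (fun c : ℝ => c • p) (nhdsWithin (1:ℝ) (Set.Ioi 1)) (nhds p) := by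
    have h1 : Filter.Tendsto (fun c : ℝ => c • p) (nhds (1:ℝ)) (nhds ((1:ℝ) • p)) :=
      (continuous_id.smul continuous_const).tendsto 1
    simpa using h1.mono_left nhdsWithin_le_nhds
  have hev : ∀ᶠ c in nhdsWithin (1:ℝ) (Set.Ioi 1), c • p ∈ Disk :=
    hcont.eventually_mem hmem
  have hev2 : ∀ᶠ c in nhdsWithin (1:ℝ) (Set.Ioi 1), c ∈ Set.Ioi (1:ℝ) :=
    eventually_mem_nhdsWithin
  obtain ⟨c, hcD, hc1⟩ := (hev.and hev2).exists
  have hp' : p.1 ^ 2 + p.2 ^ 2 = 1 := hp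
  have hcD' : (c * p.1) ^ 2 + (c * p.2) ^ 2 ≤ 1 := by
    simpa [Disk, Prod.smul_fst, Prod.smul_snd, smul_eq_mul] using hcD
  have hc1' : (1:ℝ) < c := hc1
  have key : c ^ 2 * (p.1 ^ 2 + p.2 ^ 2) = c ^ 2 * 1 := by rw [hp']
  nlinarith [key, hcD', hc1']

lemma disk_convex {p q : ℝ × ℝ} (hp : p ∈ Disk) (hq : q ∈ Disk) {s : ℝ}
    (h0 : 0 ≤ s) (h1 : s ≤ 1) : (1 - s) • p + s • q ∈ Disk := by
  have hp' : p.1 ^ 2 + p.2 ^ 2 ≤ 1 := hp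
  have hq' : q.1 ^ 2 + q.2 ^ 2 ≤ 1 := hq
  have : ((1 - s) * p.1 + s * q.1) ^ 2 + ((1 - s) * p.2 + s * q.2) ^ 2 ≤ 1 := by
    nlinarith [sq_nonneg (p.1 - q.1), sq_nonneg (p.2 - q.2),
      mul_nonneg h0 (sub_nonneg.2 h1), mul_nonneg (mul_nonneg h0 (sub_nonneg.2 h1))
        (by nlinarith [sq_nonneg (p.1 - q.1), sq_nonneg (p.2 - q.2)] :
          (0:ℝ) ≤ p.1 ^ 2 + p.2 ^ 2 + q.1 ^ 2 + q.2 ^ 2 - 2 * (p.1 * q.1 + p.2 * q.2))]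
  simpa [Disk, Prod.smul_fst, Prod.smul_snd, smul_eq_mul] using this


lemma bdry_mapsTo (h : SympD) {p : ℝ × ℝ} (hp : p ∈ Bdry) : h.toFun p ∈ Bdry := by
  have hpD : p ∈ Disk := le_of_eq hp
  by_contra hq
  set q := h.toFun p with hqdef
  have hqD : q ∈ Disk := h.mapsTo hpD
  have hqlt : q.1 ^ 2 + q.2 ^ 2 < 1 := lt_of_le_of_ne hqD hq
  obtain ⟨U, hUo, hDU, hsm⟩ := h.smooth
  obtain ⟨W, hWo, hDW, hsmInv⟩ := h.invSmooth
  -- invFun is smooth at q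
  have hInv : ContDiffAt ℝ (⊤ : ℕ∞) h.invFun q :=
    hsmInv.contDiffAt (hWo.mem_nhds (hDW hqD))
  have hinvq : h.invFun q = p := h.leftInv p hpD
  have htD : DifferentiableAt ℝ h.toFun p :=
    (hsm.contDiffAt (hUo.mem_nhds (hDU hpD))).differentiableAt (by simp)
  have hfd : DifferentiableAt ℝ h.invFun q := hInv.differentiableAt (by simp)
  -- toFun ∘ invFun = id near q
  have hid : (fun x => h.toFun (h.invFun x)) =ᶠ[nhds q] id := by
    filter_upwards [disk_mem_nhds hqlt] with x hx
    exact h.rightInv x hx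
  have hchain : fderiv ℝ (h.toFun ∘ h.invFun) q =
      (fderiv ℝ h.toFun p).comp (fderiv ℝ h.invFun q) := by
    rw [fderiv_comp q (hinvq ▸ htD) hfd, hinvq]
  have hfid : fderiv ℝ (h.toFun ∘ h.invFun) q = ContinuousLinearMap.id ℝ (ℝ × ℝ) := by
    have : fderiv ℝ (fun x => h.toFun (h.invFun x)) q = fderiv ℝ (id : ℝ × ℝ → ℝ × ℝ) q :=
      hid.fderiv_eq
    simpa [fderiv_id, Function.comp_def] using this
  have hAB : (fderiv ℝ h.toFun p).comp (fderiv ℝ h.invFun q)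
      = ContinuousLinearMap.id ℝ (ℝ × ℝ) := by rw [← hchain]; exact hfid
  set B := fderiv ℝ h.invFun q
  have hBinj : Function.Injective B := by
    intro x y hxy
    have : (fderiv ℝ h.toFun p) (B x) = (fderiv ℝ h.toFun p) (B y) := by rw [hxy]
    have hx := congrArg (fun L : (ℝ × ℝ) →L[ℝ] (ℝ × ℝ) => L x) hAB
    have hy := congrArg (fun L : (ℝ × ℝ) →L[ℝ] (ℝ × ℝ) => L y) hAB
    simp only [ContinuousLinearMap.comp_apply, ContinuousLinearMap.id_apply] at hx hy
    rw [← hx, ← hy, this]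
  have hBbij : Function.Bijective B :=
    ⟨hBinj, (LinearMap.injective_iff_surjective (f := (B : (ℝ × ℝ) →ₗ[ℝ] (ℝ × ℝ)))).1 hBinj⟩
  let e : (ℝ × ℝ) ≃L[ℝ] (ℝ × ℝ) := (LinearEquiv.ofBijective (B : (ℝ × ℝ) →ₗ[ℝ] (ℝ × ℝ)) hBbij).toContinuousLinearEquiv
  have hstrict : HasStrictFDerivAt h.invFun (e : (ℝ × ℝ) →L[ℝ] (ℝ × ℝ)) q := by
    have : HasStrictFDerivAt h.invFun B q := hInv.hasStrictFDerivAt (by simp)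
    convert this using 1
    exact ContinuousLinearMap.ext fun _ => rfl
  have hmap : Filter.map h.invFun (nhds q) = nhds p := by
    have := hstrict.map_nhds_eq_of_equiv
    rwa [hinvq] at this
  have : Disk ∈ nhds p := by
    rw [← hmap, Filter.mem_map]
    exact Filter.mem_of_superset (disk_mem_nhds hqlt) (fun x hx => h.invMapsTo hx)
  exact not_disk_nhds hp this


/-- The scalar component of the tautological 1-form pulled back: ½(F₁ (∂_v F)₂ − F₂ (∂_v F)₁). -/
def w (F : ℝ × ℝ → ℝ × ℝ) (v : ℝ × ℝ) (p : ℝ × ℝ) : ℝ :=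
  (1 / 2) * ((F p).1 * (fderiv ℝ F p v).2 - (F p).2 * (fderiv ℝ F p v).1)

lemma contDiffOn_w {F : ℝ × ℝ → ℝ × ℝ} {V : Set (ℝ × ℝ)} (hV : IsOpen V)
    (hF : ContDiffOn ℝ (⊤ : ℕ∞) F V) (v : ℝ × ℝ) : ContDiffOn ℝ (⊤ : ℕ∞) (w F v) V := by
  have hA : ContDiffOn ℝ (⊤ : ℕ∞) (fun q => fderiv ℝ F q) V :=
    hF.fderiv_of_isOpen hV (by exact_mod_cast le_top)
  have hAv : ContDiffOn ℝ (⊤ : ℕ∞) (fun q => fderiv ℝ F q v) V :=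
    hA.clm_apply contDiffOn_const
  have h1 : ContDiffOn ℝ (⊤ : ℕ∞) (fun q => (F q).1) V := contDiff_fst.comp_contDiffOn hF
  have h2 : ContDiffOn ℝ (⊤ : ℕ∞) (fun q => (F q).2) V := contDiff_snd.comp_contDiffOn hF
  have hAv1 : ContDiffOn ℝ (⊤ : ℕ∞) (fun q => (fderiv ℝ F q v).1) V :=
    contDiff_fst.comp_contDiffOn hAv
  have hAv2 : ContDiffOn ℝ (⊤ : ℕ∞) (fun q => (fderiv ℝ F q v).2) V :=
    contDiff_snd.comp_contDiffOn hAv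
  exact contDiffOn_const.mul ((h1.mul hAv2).sub (h2.mul hAv1))

lemma fderiv_w_apply {F : ℝ × ℝ → ℝ × ℝ} {p : ℝ × ℝ} (hF : ContDiffAt ℝ (⊤ : ℕ∞) F p)
    (v u : ℝ × ℝ) :
    fderiv ℝ (w F v) p u =
      (1 / 2) * ((fderiv ℝ F p u).1 * (fderiv ℝ F p v).2
        + (F p).1 * (fderiv ℝ (fderiv ℝ F) p u v).2
        - ((fderiv ℝ F p u).2 * (fderiv ℝ F p v).1
        + (F p).2 * (fderiv ℝ (fderiv ℝ F) p u v).1)) := by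
  have hFd : DifferentiableAt ℝ F p := hF.differentiableAt (by simp)
  have hA : DifferentiableAt ℝ (fun q => fderiv ℝ F q) p :=
    (hF.fderiv_right (m := 1) (WithTop.coe_le_coe.mpr le_top)).differentiableAt one_ne_zero
  have hAv : DifferentiableAt ℝ (fun q => fderiv ℝ F q v) p :=
    hA.clm_apply (differentiableAt_const v)
  have h1 : DifferentiableAt ℝ (fun q => (F q).1) p := hFd.fst
  have h2 : DifferentiableAt ℝ (fun q => (F q).2) p := hFd.snd
  have hAv1 : DifferentiableAt ℝ (fun q => (fderiv ℝ F q v).1) p := hAv.fst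
  have hAv2 : DifferentiableAt ℝ (fun q => (fderiv ℝ F q v).2) p := hAv.snd
  have e1 : fderiv ℝ (fun q => (F q).1) p u = (fderiv ℝ F p u).1 := by
    rw [(hFd.hasFDerivAt.fst).fderiv]; rfl
  have e2 : fderiv ℝ (fun q => (F q).2) p u = (fderiv ℝ F p u).2 := by
    rw [(hFd.hasFDerivAt.snd).fderiv]; rfl
  have eAv : fderiv ℝ (fun q => fderiv ℝ F q v) p u = fderiv ℝ (fderiv ℝ F) p u v := by
    rw [fderiv_clm_apply hA (differentiableAt_const v)]
    simp
  have eAv1 : fderiv ℝ (fun q => (fderiv ℝ F q v).1) p u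
      = (fderiv ℝ (fderiv ℝ F) p u v).1 := by
    rw [(hAv.hasFDerivAt.fst).fderiv]
    rw [show ((ContinuousLinearMap.fst ℝ ℝ ℝ).comp
      (fderiv ℝ (fun q => fderiv ℝ F q v) p)) u
      = (fderiv ℝ (fun q => fderiv ℝ F q v) p u).1 from rfl, eAv]
  have eAv2 : fderiv ℝ (fun q => (fderiv ℝ F q v).2) p u
      = (fderiv ℝ (fderiv ℝ F) p u v).2 := by
    rw [(hAv.hasFDerivAt.snd).fderiv]
    rw [show ((ContinuousLinearMap.snd ℝ ℝ ℝ).comp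
      (fderiv ℝ (fun q => fderiv ℝ F q v) p)) u
      = (fderiv ℝ (fun q => fderiv ℝ F q v) p u).2 from rfl, eAv]
  have hw : w F v = fun q => (1 / 2) *
      ((fun q => (F q).1) q * (fun q => (fderiv ℝ F q v).2) q
        - (fun q => (F q).2) q * (fun q => (fderiv ℝ F q v).1) q) := rfl
  rw [hw, fderiv_const_mul ((by exact (h1.mul hAv2).sub (h2.mul hAv1)) : DifferentiableAt ℝ
    (fun q => (F q).1 * (fderiv ℝ F q v).2 - (F q).2 * (fderiv ℝ F q v).1) p)]
  rw [ContinuousLinearMap.smul_apply]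
  rw [fderiv_fun_sub ((by exact h1.mul hAv2) : DifferentiableAt ℝ (fun q => (F q).1 * (fderiv ℝ F q v).2) p)
    ((by exact h2.mul hAv1) : DifferentiableAt ℝ (fun q => (F q).2 * (fderiv ℝ F q v).1) p),
    ContinuousLinearMap.sub_apply]
  rw [fderiv_fun_mul h1 hAv2, fderiv_fun_mul h2 hAv1]
  simp only [ContinuousLinearMap.add_apply, ContinuousLinearMap.smul_apply, smul_eq_mul]
  rw [e1, e2, eAv1, eAv2]
  ring

lemma crossdiff {F : ℝ × ℝ → ℝ × ℝ} {p : ℝ × ℝ} (hF : ContDiffAt ℝ (⊤ : ℕ∞) F p) :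
    fderiv ℝ (w F (0, 1)) p (1, 0) - fderiv ℝ (w F (1, 0)) p (0, 1)
      = (fderiv ℝ F p (1, 0)).1 * (fderiv ℝ F p (0, 1)).2
        - (fderiv ℝ F p (0, 1)).1 * (fderiv ℝ F p (1, 0)).2 := by
  have hsymm : ∀ a b : ℝ × ℝ, fderiv ℝ (fderiv ℝ F) p a b = fderiv ℝ (fderiv ℝ F) p b a := by
    intro a b
    exact (hF.isSymmSndFDerivAt (by simp only [minSmoothness_of_isRCLikeNormedField]; exact WithTop.coe_le_coe.mpr le_top)) a b
  rw [fderiv_w_apply hF (0,1) (1,0), fderiv_w_apply hF (1,0) (0,1),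
    hsymm (0,1) (1,0)]
  ring


/-- Line integral of the tautological 1-form η along a curve. -/
def cInt (c : ℝ → ℝ × ℝ) : ℝ :=
  ∫ t in (0:ℝ)..1, (1 / 2) * ((c t).1 * (deriv c t).2 - (c t).2 * (deriv c t).1)

/-- Integral of `G*η - η` along a curve. -/
def LA (G : ℝ × ℝ → ℝ × ℝ) (c : ℝ → ℝ × ℝ) : ℝ := cInt (fun t => G (c t)) - cInt c

lemma cInt_const (p : ℝ × ℝ) : cInt (fun _ => p) = 0 := by
  simp [cInt, deriv_const]

lemma LA_const (G : ℝ × ℝ → ℝ × ℝ) (p : ℝ × ℝ) : LA G (fun _ => p) = 0 := by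
  unfold LA
  rw [show (fun t : ℝ => G ((fun _ : ℝ => p) t)) = (fun _ : ℝ => G p) from rfl,
    cInt_const, cInt_const]
  ring

lemma green {G : ℝ × ℝ → ℝ × ℝ} {U : Set (ℝ × ℝ)} (hU : IsOpen U)
    (hGs : ContDiffOn ℝ (⊤ : ℕ∞) G U) (hDU : Disk ⊆ U)
    (hdet : ∀ p ∈ Disk,
      (fderiv ℝ G p (1, 0)).1 * (fderiv ℝ G p (0, 1)).2
        - (fderiv ℝ G p (0, 1)).1 * (fderiv ℝ G p (1, 0)).2 = 1)
    {H : ℝ × ℝ → ℝ × ℝ} {V : Set (ℝ × ℝ)} (hV : IsOpen V)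
    (hHs : ContDiffOn ℝ (⊤ : ℕ∞) H V)
    (hsq : Icc (0:ℝ) 1 ×ˢ Icc (0:ℝ) 1 ⊆ V)
    (himg : ∀ x ∈ Icc (0:ℝ) 1 ×ˢ Icc (0:ℝ) 1, H x ∈ Disk) :
    LA G (fun t => H (1, t)) - LA G (fun t => H (0, t))
      = LA G (fun s => H (s, 1)) - LA G (fun s => H (s, 0)) := by
  have huIcc : Set.uIcc (0:ℝ) 1 = Icc (0:ℝ) 1 := uIcc_of_le zero_le_one
  set V' : Set (ℝ × ℝ) := V ∩ H ⁻¹' U with hV'def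
  have hV'o : IsOpen V' := hHs.continuousOn.isOpen_inter_preimage hV hU
  have hsq' : Icc (0:ℝ) 1 ×ˢ Icc (0:ℝ) 1 ⊆ V' :=
    fun x hx => ⟨hsq hx, hDU (himg x hx)⟩
  set K : ℝ × ℝ → ℝ × ℝ := fun y => G (H y) with hKdef
  have hKs : ContDiffOn ℝ (⊤ : ℕ∞) K V' :=
    hGs.comp (hHs.mono inter_subset_left) (fun x hx => hx.2)
  have hHs' : ContDiffOn ℝ (⊤ : ℕ∞) H V' := hHs.mono inter_subset_left
  set f : ℝ × ℝ → ℝ := fun x => w K (0, 1) x - w H (0, 1) x with hfdef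
  set gg : ℝ × ℝ → ℝ := fun x => w H (1, 0) x - w K (1, 0) x with hggdef
  have hfs : ContDiffOn ℝ (⊤ : ℕ∞) f V' :=
    (contDiffOn_w hV'o hKs _).sub (contDiffOn_w hV'o hHs' _)
  have hggs : ContDiffOn ℝ (⊤ : ℕ∞) gg V' :=
    (contDiffOn_w hV'o hHs' _).sub (contDiffOn_w hV'o hKs _)
  -- pointwise vanishing of the divergence
  have hzero : ∀ x ∈ Icc (0:ℝ) 1 ×ˢ Icc (0:ℝ) 1,
      fderiv ℝ f x (1, 0) + fderiv ℝ gg x (0, 1) = 0 := by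
    intro x hx
    have hxV : x ∈ V' := hsq' hx
    have hKat : ContDiffAt ℝ (⊤ : ℕ∞) K x := hKs.contDiffAt (hV'o.mem_nhds hxV)
    have hHat : ContDiffAt ℝ (⊤ : ℕ∞) H x := hHs'.contDiffAt (hV'o.mem_nhds hxV)
    have hdK0 : DifferentiableAt ℝ (w K (0,1)) x :=
      ((contDiffOn_w hV'o hKs (0,1)).contDiffAt (hV'o.mem_nhds hxV)).differentiableAt
        (by simp)
    have hdK1 : DifferentiableAt ℝ (w K (1,0)) x :=
      ((contDiffOn_w hV'o hKs (1,0)).contDiffAt (hV'o.mem_nhds hxV)).differentiableAt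
        (by simp)
    have hdH0 : DifferentiableAt ℝ (w H (0,1)) x :=
      ((contDiffOn_w hV'o hHs' (0,1)).contDiffAt (hV'o.mem_nhds hxV)).differentiableAt
        (by simp)
    have hdH1 : DifferentiableAt ℝ (w H (1,0)) x :=
      ((contDiffOn_w hV'o hHs' (1,0)).contDiffAt (hV'o.mem_nhds hxV)).differentiableAt
        (by simp)
    have ef : fderiv ℝ f x (1,0) = fderiv ℝ (w K (0,1)) x (1,0) - fderiv ℝ (w H (0,1)) x (1,0) := by
      rw [hfdef]
      rw [fderiv_fun_sub hdK0 hdH0]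
      rfl
    have eg : fderiv ℝ gg x (0,1) = fderiv ℝ (w H (1,0)) x (0,1) - fderiv ℝ (w K (1,0)) x (0,1) := by
      rw [hggdef]
      rw [fderiv_fun_sub hdH1 hdK1]
      rfl
    rw [ef, eg]
    have hcK := crossdiff hKat
    have hcH := crossdiff hHat
    -- Jacobian of K via chain rule
    have hGat : DifferentiableAt ℝ G (H x) :=
      (hGs.contDiffAt (hU.mem_nhds (hDU (himg x hx)))).differentiableAt
        (by simp)
    have hHdiff : DifferentiableAt ℝ H x :=
      hHat.differentiableAt (by simp)
    have hchain : fderiv ℝ K x = (fderiv ℝ G (H x)).comp (fderiv ℝ H x) := by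
      rw [hKdef]
      exact fderiv_comp x hGat hHdiff
    set M := fderiv ℝ G (H x) with hM
    set a := fderiv ℝ H x (1,0) with ha
    set b := fderiv ℝ H x (0,1) with hb
    have hKa : fderiv ℝ K x (1,0) = M a := by rw [hchain]; rfl
    have hKb : fderiv ℝ K x (0,1) = M b := by rw [hchain]; rfl
    have expand : ∀ z : ℝ × ℝ, M z = z.1 • M (1,0) + z.2 • M (0,1) := by
      intro z
      have hz : z = z.1 • ((1:ℝ),(0:ℝ)) + z.2 • ((0:ℝ),(1:ℝ)) := by
        apply Prod.ext <;> simp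
      conv_lhs => rw [hz]
      rw [map_add, M.map_smul, M.map_smul]
    have hdetx := hdet (H x) (himg x hx)
    rw [← hM] at hdetx
    have hMa1 : (M a).1 = a.1 * (M (1,0)).1 + a.2 * (M (0,1)).1 := by
      rw [expand a]; simp
    have hMa2 : (M a).2 = a.1 * (M (1,0)).2 + a.2 * (M (0,1)).2 := by
      rw [expand a]; simp
    have hMb1 : (M b).1 = b.1 * (M (1,0)).1 + b.2 * (M (0,1)).1 := by
      rw [expand b]; simp
    have hMb2 : (M b).2 = b.1 * (M (1,0)).2 + b.2 * (M (0,1)).2 := by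
      rw [expand b]; simp
    have hJK : (fderiv ℝ (w K (0,1)) x) (1,0) - (fderiv ℝ (w K (1,0)) x) (0,1)
        = a.1 * b.2 - b.1 * a.2 := by
      rw [hcK, hKa, hKb, hMa1, hMa2, hMb1, hMb2]
      linear_combination (a.1 * b.2 - b.1 * a.2) * hdetx
    linarith [hJK, hcH]
  -- side identifications
  have hvert : ∀ (F : ℝ × ℝ → ℝ × ℝ), ContDiffOn ℝ (⊤ : ℕ∞) F V' → ∀ s₀ : ℝ, s₀ ∈ Icc (0:ℝ) 1 →
      (∫ t in (0:ℝ)..1, w F (0,1) (s₀, t)) = cInt (fun t => F (s₀, t)) := by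
    intro F hFs s₀ hs₀
    apply intervalIntegral.integral_congr
    intro t ht
    rw [huIcc] at ht
    have hxV : ((s₀ : ℝ), t) ∈ V' := hsq' ⟨hs₀, ht⟩
    have hFd : DifferentiableAt ℝ F (s₀, t) :=
      (hFs.contDiffAt (hV'o.mem_nhds hxV)).differentiableAt (by simp)
    have hι : HasDerivAt (fun t : ℝ => ((s₀ : ℝ), t)) ((0:ℝ), (1:ℝ)) t :=
      (hasDerivAt_const t s₀).prodMk (hasDerivAt_id t)
    have hd : HasDerivAt (fun t : ℝ => F (s₀, t)) (fderiv ℝ F (s₀, t) (0,1)) t :=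
      hFd.hasFDerivAt.comp_hasDerivAt t hι
    simp only [w]
    rw [hd.deriv]
  have hhorz : ∀ (F : ℝ × ℝ → ℝ × ℝ), ContDiffOn ℝ (⊤ : ℕ∞) F V' → ∀ t₀ : ℝ, t₀ ∈ Icc (0:ℝ) 1 →
      (∫ s in (0:ℝ)..1, w F (1,0) (s, t₀)) = cInt (fun s => F (s, t₀)) := by
    intro F hFs t₀ ht₀
    apply intervalIntegral.integral_congr
    intro s hs
    rw [huIcc] at hs
    have hxV : ((s : ℝ), t₀) ∈ V' := hsq' ⟨hs, ht₀⟩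
    have hFd : DifferentiableAt ℝ F (s, t₀) :=
      (hFs.contDiffAt (hV'o.mem_nhds hxV)).differentiableAt (by simp)
    have hι : HasDerivAt (fun s : ℝ => (s, t₀)) ((1:ℝ), (0:ℝ)) s :=
      (hasDerivAt_id s).prodMk (hasDerivAt_const s t₀)
    have hd : HasDerivAt (fun s : ℝ => F (s, t₀)) (fderiv ℝ F (s, t₀) (1,0)) s :=
      hFd.hasFDerivAt.comp_hasDerivAt s hι
    simp only [w]
    rw [hd.deriv]
  -- integrability of w on vertical/horizontal segments
  have hii : ∀ (F : ℝ × ℝ → ℝ × ℝ), ContDiffOn ℝ (⊤ : ℕ∞) F V' → ∀ (v : ℝ × ℝ) (s₀ : ℝ),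
      s₀ ∈ Icc (0:ℝ) 1 →
      IntervalIntegrable (fun t => w F v (s₀, t)) volume 0 1 := by
    intro F hFs v s₀ hs₀
    apply ContinuousOn.intervalIntegrable
    rw [huIcc]
    have : ContinuousOn (fun t : ℝ => ((s₀:ℝ), t)) (Icc (0:ℝ) 1) :=
      (continuous_const.prodMk continuous_id).continuousOn
    exact ((contDiffOn_w hV'o hFs v).continuousOn.comp this
      (fun t ht => hsq' ⟨hs₀, ht⟩))
  have hii2 : ∀ (F : ℝ × ℝ → ℝ × ℝ), ContDiffOn ℝ (⊤ : ℕ∞) F V' → ∀ (v : ℝ × ℝ) (t₀ : ℝ),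
      t₀ ∈ Icc (0:ℝ) 1 →
      IntervalIntegrable (fun s => w F v (s, t₀)) volume 0 1 := by
    intro F hFs v t₀ ht₀
    apply ContinuousOn.intervalIntegrable
    rw [huIcc]
    have : ContinuousOn (fun s : ℝ => (s, (t₀:ℝ))) (Icc (0:ℝ) 1) :=
      (continuous_id.prodMk continuous_const).continuousOn
    exact ((contDiffOn_w hV'o hFs v).continuousOn.comp this
      (fun s hs => hsq' ⟨hs, ht₀⟩))
  -- the divergence theorem
  have hdiv := integral2_divergence_prod_of_hasFDerivAt_off_countable f gg
    (fun x => fderiv ℝ f x) (fun x => fderiv ℝ gg x) 0 0 1 1 ∅ countable_empty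
    (by rw [huIcc]; exact (hfs.continuousOn).mono hsq')
    (by rw [huIcc]; exact (hggs.continuousOn).mono hsq')
    (by
      intro x hx
      have hx1 : x ∈ Ioo (0:ℝ) 1 ×ˢ Ioo (0:ℝ) 1 := by simpa using hx.1
      have hxsq : x ∈ Icc (0:ℝ) 1 ×ˢ Icc (0:ℝ) 1 :=
        ⟨Ioo_subset_Icc_self hx1.1, Ioo_subset_Icc_self hx1.2⟩
      exact ((hfs.contDiffAt (hV'o.mem_nhds (hsq' hxsq))).differentiableAt
        (by simp)).hasFDerivAt)
    (by
      intro x hx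
      have hx1 : x ∈ Ioo (0:ℝ) 1 ×ˢ Ioo (0:ℝ) 1 := by simpa using hx.1
      have hxsq : x ∈ Icc (0:ℝ) 1 ×ˢ Icc (0:ℝ) 1 :=
        ⟨Ioo_subset_Icc_self hx1.1, Ioo_subset_Icc_self hx1.2⟩
      exact ((hggs.contDiffAt (hV'o.mem_nhds (hsq' hxsq))).differentiableAt
        (by simp)).hasFDerivAt)
    (by
      rw [huIcc]
      rw [integrableOn_congr_fun hzero (measurableSet_Icc.prod measurableSet_Icc)]
      exact integrableOn_zero)
  -- LHS is zero
  have hL : (∫ x in (0:ℝ)..1, ∫ y in (0:ℝ)..1,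
      (fderiv ℝ f (x, y) (1, 0) + fderiv ℝ gg (x, y) (0, 1))) = 0 := by
    have h1 : EqOn (fun s : ℝ => ∫ y in (0:ℝ)..1,
        (fderiv ℝ f (s, y) (1, 0) + fderiv ℝ gg (s, y) (0, 1))) (fun _ => (0:ℝ))
        (Set.uIcc (0:ℝ) 1) := by
      intro s hs
      rw [huIcc] at hs
      have h2 : EqOn (fun t : ℝ => fderiv ℝ f (s, t) (1, 0) + fderiv ℝ gg (s, t) (0, 1))
          (fun _ => (0:ℝ)) (Set.uIcc (0:ℝ) 1) := by
        intro t ht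
        rw [huIcc] at ht
        exact hzero (s, t) ⟨hs, ht⟩
      calc (fun s : ℝ => ∫ y in (0:ℝ)..1,
          (fderiv ℝ f (s, y) (1, 0) + fderiv ℝ gg (s, y) (0, 1))) s
          = ∫ y in (0:ℝ)..1, (0:ℝ) := intervalIntegral.integral_congr h2
        _ = (fun _ => (0:ℝ)) s := by simp
    calc (∫ x in (0:ℝ)..1, ∫ y in (0:ℝ)..1,
        (fderiv ℝ f (x, y) (1, 0) + fderiv ℝ gg (x, y) (0, 1)))
        = ∫ x in (0:ℝ)..1, (0:ℝ) := intervalIntegral.integral_congr h1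
      _ = 0 := by simp
  beta_reduce at hdiv
  rw [hL] at hdiv
  -- boundary identifications
  have h01 : (0:ℝ) ∈ Icc (0:ℝ) 1 := ⟨le_refl 0, zero_le_one⟩
  have h11 : (1:ℝ) ∈ Icc (0:ℝ) 1 := ⟨zero_le_one, le_refl 1⟩
  have ef1 : (∫ y in (0:ℝ)..1, f (1, y)) = LA G (fun t => H (1, t)) := by
    calc (∫ y in (0:ℝ)..1, f (1, y))
        = ∫ y in (0:ℝ)..1, (w K (0,1) (1,y) - w H (0,1) (1,y)) := rfl
      _ = (∫ y in (0:ℝ)..1, w K (0,1) (1,y)) - ∫ y in (0:ℝ)..1, w H (0,1) (1,y) :=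
          intervalIntegral.integral_sub (hii K hKs (0,1) 1 h11) (hii H hHs' (0,1) 1 h11)
      _ = cInt (fun t => K (1,t)) - cInt (fun t => H (1,t)) := by
          rw [hvert K hKs 1 h11, hvert H hHs' 1 h11]
      _ = LA G (fun t => H (1,t)) := rfl
  have ef0 : (∫ y in (0:ℝ)..1, f (0, y)) = LA G (fun t => H (0, t)) := by
    calc (∫ y in (0:ℝ)..1, f (0, y))
        = ∫ y in (0:ℝ)..1, (w K (0,1) (0,y) - w H (0,1) (0,y)) := rfl
      _ = (∫ y in (0:ℝ)..1, w K (0,1) (0,y)) - ∫ y in (0:ℝ)..1, w H (0,1) (0,y) :=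
          intervalIntegral.integral_sub (hii K hKs (0,1) 0 h01) (hii H hHs' (0,1) 0 h01)
      _ = cInt (fun t => K (0,t)) - cInt (fun t => H (0,t)) := by
          rw [hvert K hKs 0 h01, hvert H hHs' 0 h01]
      _ = LA G (fun t => H (0,t)) := rfl
  have eg1 : (∫ x in (0:ℝ)..1, gg (x, 1)) = - LA G (fun s => H (s, 1)) := by
    have hLA : LA G (fun s => H (s,1)) = cInt (fun s => K (s,1)) - cInt (fun s => H (s,1)) := rfl
    calc (∫ x in (0:ℝ)..1, gg (x, 1))
        = ∫ x in (0:ℝ)..1, (w H (1,0) (x,1) - w K (1,0) (x,1)) := rfl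
      _ = (∫ x in (0:ℝ)..1, w H (1,0) (x,1)) - ∫ x in (0:ℝ)..1, w K (1,0) (x,1) :=
          intervalIntegral.integral_sub (hii2 H hHs' (1,0) 1 h11) (hii2 K hKs (1,0) 1 h11)
      _ = cInt (fun s => H (s,1)) - cInt (fun s => K (s,1)) := by
          rw [hhorz K hKs 1 h11, hhorz H hHs' 1 h11]
      _ = - LA G (fun s => H (s,1)) := by rw [hLA]; ring
  have eg0 : (∫ x in (0:ℝ)..1, gg (x, 0)) = - LA G (fun s => H (s, 0)) := by
    have hLA : LA G (fun s => H (s,0)) = cInt (fun s => K (s,0)) - cInt (fun s => H (s,0)) := rfl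
    calc (∫ x in (0:ℝ)..1, gg (x, 0))
        = ∫ x in (0:ℝ)..1, (w H (1,0) (x,0) - w K (1,0) (x,0)) := rfl
      _ = (∫ x in (0:ℝ)..1, w H (1,0) (x,0)) - ∫ x in (0:ℝ)..1, w K (1,0) (x,0) :=
          intervalIntegral.integral_sub (hii2 H hHs' (1,0) 0 h01) (hii2 K hKs (1,0) 0 h01)
      _ = cInt (fun s => H (s,0)) - cInt (fun s => K (s,0)) := by
          rw [hhorz K hKs 0 h01, hhorz H hHs' 0 h01]
      _ = - LA G (fun s => H (s,0)) := by rw [hLA]; ring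
  rw [ef1, ef0, eg1, eg0] at hdiv
  linarith


lemma cInt_c0 : cInt (fun t : ℝ => ((t:ℝ), (0:ℝ))) = 0 := by
  have h : EqOn (fun t : ℝ => (1 / 2) * (((fun t : ℝ => ((t:ℝ),(0:ℝ))) t).1
      * (deriv (fun t : ℝ => ((t:ℝ),(0:ℝ))) t).2
      - ((fun t : ℝ => ((t:ℝ),(0:ℝ))) t).2 * (deriv (fun t : ℝ => ((t:ℝ),(0:ℝ))) t).1))
      (fun _ => (0:ℝ)) (Set.uIcc 0 1) := by
    intro t ht
    have hder : HasDerivAt (fun t : ℝ => ((t:ℝ),(0:ℝ))) ((1:ℝ),(0:ℝ)) t :=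
      (hasDerivAt_id t).prodMk (hasDerivAt_const t 0)
    simp [hder.deriv]
  calc cInt (fun t : ℝ => ((t:ℝ), (0:ℝ))) = ∫ t in (0:ℝ)..1, (0:ℝ) :=
        intervalIntegral.integral_congr h
    _ = 0 := by simp

lemma tau_eq (g : SympD) : tau g = cInt (fun t => g.toFun (t, 0)) := by
  unfold tau cInt
  apply intervalIntegral.integral_congr
  intro t ht
  rw [Set.uIcc_of_le zero_le_one] at ht
  obtain ⟨U, hUo, hDU, hsm⟩ := g.smooth
  have htD : ((t:ℝ), (0:ℝ)) ∈ Disk := by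
    show t ^ 2 + (0:ℝ) ^ 2 ≤ 1
    nlinarith [ht.1, ht.2]
  have hFd : DifferentiableAt ℝ g.toFun (t, 0) :=
    (hsm.contDiffAt (hUo.mem_nhds (hDU htD))).differentiableAt (by simp)
  have hder : HasDerivAt (fun t : ℝ => g.toFun (t, 0)) (fderiv ℝ g.toFun (t, 0) (1, 0)) t :=
    hFd.hasFDerivAt.comp_hasDerivAt t ((hasDerivAt_id t).prodMk (hasDerivAt_const t 0))
  simp only [hder.deriv]

lemma tau_comp (g h gh : SympD) (hcomp : ∀ p ∈ Disk, gh.toFun p = g.toFun (h.toFun p)) :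
    tau gh = cInt (fun t => g.toFun (h.toFun (t, 0))) := by
  obtain ⟨U, hUo, hDU, hGsm⟩ := g.smooth
  obtain ⟨W, hWo, hDW, hHsm⟩ := h.smooth
  unfold tau cInt
  apply intervalIntegral.integral_congr_ae
  have h1 : ∀ᵐ t : ℝ, t ≠ (1:ℝ) := by
    rw [MeasureTheory.ae_iff]
    have : {a : ℝ | ¬ a ≠ 1} = {(1:ℝ)} := by ext a; simp
    rw [this]
    exact Real.volume_singleton
  filter_upwards [h1] with t hne ht
  have ht' : t ∈ Set.Ioc (0:ℝ) 1 := by rwa [Set.uIoc_of_le zero_le_one] at ht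
  have htlt : t < 1 := lt_of_le_of_ne ht'.2 hne
  have hint : ((t:ℝ),(0:ℝ)).1 ^ 2 + ((t:ℝ),(0:ℝ)).2 ^ 2 < 1 := by
    show t ^ 2 + (0:ℝ) ^ 2 < 1
    nlinarith [ht'.1]
  have htD : ((t:ℝ),(0:ℝ)) ∈ Disk := le_of_lt hint
  have hev : gh.toFun =ᶠ[nhds ((t:ℝ),(0:ℝ))] (fun p => g.toFun (h.toFun p)) := by
    filter_upwards [disk_mem_nhds hint] with p hp
    exact hcomp p hp
  have hfe : fderiv ℝ gh.toFun (t,0) = fderiv ℝ (fun p => g.toFun (h.toFun p)) (t,0) :=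
    hev.fderiv_eq
  have hval : gh.toFun (t,0) = g.toFun (h.toFun (t,0)) := hcomp (t,0) htD
  have hHd : DifferentiableAt ℝ h.toFun (t,0) :=
    (hHsm.contDiffAt (hWo.mem_nhds (hDW htD))).differentiableAt (by simp)
  have hGd : DifferentiableAt ℝ g.toFun (h.toFun (t,0)) :=
    (hGsm.contDiffAt (hUo.mem_nhds (hDU (h.mapsTo htD)))).differentiableAt
      (by simp)
  have hcompD : DifferentiableAt ℝ (fun p => g.toFun (h.toFun p)) (t,0) :=
    DifferentiableAt.comp ((t:ℝ),(0:ℝ)) hGd hHd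
  have hder : HasDerivAt (fun s : ℝ => g.toFun (h.toFun (s, 0)))
      (fderiv ℝ (fun p => g.toFun (h.toFun p)) (t,0) (1,0)) t :=
    hcompD.hasFDerivAt.comp_hasDerivAt (f := fun s : ℝ => ((s:ℝ),(0:ℝ))) t ((hasDerivAt_id t).prodMk (hasDerivAt_const t 0))
  simp only [hval, hfe, hder.deriv]

lemma exists_angle {q : ℝ × ℝ} (hq : q ∈ Bdry) :
    ∃ θ : ℝ, Real.cos θ = q.1 ∧ Real.sin θ = q.2 := by
  have h1 : q.1 ^ 2 + q.2 ^ 2 = 1 := hq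
  have hq1a : -1 ≤ q.1 := by nlinarith [sq_nonneg q.2]
  have hq1b : q.1 ≤ 1 := by nlinarith [sq_nonneg q.2]
  by_cases h2 : 0 ≤ q.2
  · refine ⟨Real.arccos q.1, Real.cos_arccos hq1a hq1b, ?_⟩
    rw [Real.sin_arccos, show 1 - q.1 ^ 2 = q.2 ^ 2 by nlinarith]
    exact Real.sqrt_sq h2
  · refine ⟨-Real.arccos q.1, by rw [Real.cos_neg]; exact Real.cos_arccos hq1a hq1b, ?_⟩
    rw [Real.sin_neg, Real.sin_arccos, show 1 - q.1 ^ 2 = q.2 ^ 2 by nlinarith,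
      Real.sqrt_sq_eq_abs, abs_of_nonpos (le_of_not_ge h2)]
    ring

lemma delta_eq (g h gh : SympD) (hh : FixesOrigin h)
    (hcomp : ∀ p ∈ Disk, gh.toFun p = g.toFun (h.toFun p))
    {q : ℝ × ℝ} (hq : h.toFun (1, 0) = q) (hqD : q ∈ Disk) {θ : ℝ}
    (hcos : Real.cos θ = q.1) (hsin : Real.sin θ = q.2) :
    tau gh - tau g - tau h
      = LA g.toFun (fun t => (Real.cos (t * θ), Real.sin (t * θ))) := by
  obtain ⟨U, hUo, hDU, hGsm⟩ := g.smooth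
  obtain ⟨W, hWo, hDW, hHsm⟩ := h.smooth
  set a : ℝ → ℝ × ℝ := fun t => (Real.cos (t * θ), Real.sin (t * θ)) with hadef
  set σ : ℝ → ℝ × ℝ := fun s => (1 - s) • ((1:ℝ),(0:ℝ)) + s • q with hσdef
  have h10D : ((1:ℝ),(0:ℝ)) ∈ Disk := by show (1:ℝ)^2 + (0:ℝ)^2 ≤ 1; norm_num
  have haD : ∀ t : ℝ, a t ∈ Disk := by
    intro t
    show Real.cos (t * θ) ^ 2 + Real.sin (t * θ) ^ 2 ≤ 1
    rw [Real.cos_sq_add_sin_sq]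
  have hσD : ∀ s : ℝ, s ∈ Icc (0:ℝ) 1 → σ s ∈ Disk := fun s hs =>
    disk_convex h10D hqD hs.1 hs.2
  -- Homotopy 1 : from the base segment to h ∘ (base segment)
  set H₁ : ℝ × ℝ → ℝ × ℝ :=
    fun x => (1 - x.1) • ((x.2 : ℝ), (0:ℝ)) + x.1 • h.toFun (x.2, 0) with hH₁def
  set V₁ : Set (ℝ × ℝ) := (fun x : ℝ × ℝ => ((x.2 : ℝ), (0:ℝ))) ⁻¹' W with hV₁def
  have hV₁o : IsOpen V₁ := hWo.preimage (by fun_prop)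
  have hH₁s : ContDiffOn ℝ (⊤ : ℕ∞) H₁ V₁ := by
    apply ContDiffOn.add
    · exact ((contDiff_const.sub contDiff_fst).contDiffOn).smul
        ((contDiff_snd.prodMk contDiff_const).contDiffOn)
    · exact (contDiff_fst.contDiffOn).smul
        (hHsm.comp ((contDiff_snd.prodMk contDiff_const).contDiffOn) (fun x hx => hx))
  have hbaseD : ∀ t : ℝ, t ∈ Icc (0:ℝ) 1 → ((t:ℝ),(0:ℝ)) ∈ Disk := by
    intro t ht
    show t ^ 2 + (0:ℝ) ^ 2 ≤ 1
    nlinarith [ht.1, ht.2]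
  have hsq₁ : Icc (0:ℝ) 1 ×ˢ Icc (0:ℝ) 1 ⊆ V₁ :=
    fun x hx => hDW (hbaseD x.2 hx.2)
  have himg₁ : ∀ x ∈ Icc (0:ℝ) 1 ×ˢ Icc (0:ℝ) 1, H₁ x ∈ Disk := by
    intro x hx
    exact disk_convex (hbaseD x.2 hx.2) (h.mapsTo (hbaseD x.2 hx.2)) hx.1.1 hx.1.2
  have green₁ := green hUo hGsm hDU g.areaPreserving hV₁o hH₁s hsq₁ himg₁
  have e1 : (fun t => H₁ ((1:ℝ), t)) = (fun t : ℝ => h.toFun (t, 0)) := by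
    funext t; simp [hH₁def]
  have e2 : (fun t => H₁ ((0:ℝ), t)) = (fun t : ℝ => ((t:ℝ), (0:ℝ))) := by
    funext t; simp [hH₁def]
  have e3 : (fun s => H₁ (s, (1:ℝ))) = σ := by
    funext s; simp only [hH₁def, hσdef, hq]
  have e4 : (fun s => H₁ (s, (0:ℝ))) = (fun _ : ℝ => ((0:ℝ), (0:ℝ))) := by
    funext s
    show (1 - s) • ((0:ℝ),(0:ℝ)) + s • h.toFun ((0:ℝ), (0:ℝ)) = ((0:ℝ),(0:ℝ))
    rw [show h.toFun ((0:ℝ), (0:ℝ)) = ((0:ℝ),(0:ℝ)) from hh]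
    apply Prod.ext <;> simp
  rw [e1, e2, e3, e4] at green₁
  -- Homotopy 2 : from the chord σ to the arc a
  set H₂ : ℝ × ℝ → ℝ × ℝ := fun x => (1 - x.1) • σ x.2 + x.1 • a x.2 with hH₂def
  have hσc : ContDiff ℝ (⊤ : ℕ∞) σ := by
    rw [hσdef]
    exact ((contDiff_const.sub contDiff_id).smul contDiff_const).add
      (contDiff_id.smul contDiff_const)
  have hac : ContDiff ℝ (⊤ : ℕ∞) a := by
    rw [hadef]
    exact (Real.contDiff_cos.comp (contDiff_id.mul contDiff_const)).prodMk
      (Real.contDiff_sin.comp (contDiff_id.mul contDiff_const))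
  have hH₂s : ContDiffOn ℝ (⊤ : ℕ∞) H₂ (univ : Set (ℝ × ℝ)) := by
    apply ContDiff.contDiffOn
    exact ((contDiff_const.sub contDiff_fst).smul (hσc.comp contDiff_snd)).add
      (contDiff_fst.smul (hac.comp contDiff_snd))
  have himg₂ : ∀ x ∈ Icc (0:ℝ) 1 ×ˢ Icc (0:ℝ) 1, H₂ x ∈ Disk := by
    intro x hx
    exact disk_convex (hσD x.2 hx.2) (haD x.2) hx.1.1 hx.1.2
  have green₂ := green hUo hGsm hDU g.areaPreserving isOpen_univ hH₂s
    (subset_univ _) himg₂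
  have f1 : (fun t => H₂ ((1:ℝ), t)) = a := by
    funext t; simp [hH₂def]
  have f2 : (fun t => H₂ ((0:ℝ), t)) = σ := by
    funext t; simp [hH₂def]
  have f3 : (fun s => H₂ (s, (1:ℝ))) = (fun _ : ℝ => q) := by
    funext s
    have hσ1 : σ 1 = q := by simp [hσdef]
    have ha1 : a 1 = q := by
      simp only [hadef, one_mul]
      exact Prod.ext hcos hsin
    simp only [hH₂def, hσ1, ha1]
    rw [← add_smul]
    simp
  have f4 : (fun s => H₂ (s, (0:ℝ))) = (fun _ : ℝ => ((1:ℝ), (0:ℝ))) := by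
    funext s
    have hσ0 : σ 0 = ((1:ℝ),(0:ℝ)) := by simp [hσdef]
    have ha0 : a 0 = ((1:ℝ),(0:ℝ)) := by simp [hadef]
    simp only [hH₂def, hσ0, ha0]
    rw [← add_smul]
    simp
  rw [f1, f2, f3, f4, LA_const, LA_const] at green₂
  -- assemble
  have t1 : tau gh = cInt (fun t => g.toFun (h.toFun (t, 0))) := tau_comp g h gh hcomp
  have t2 : tau g = cInt (fun t => g.toFun (t, 0)) := tau_eq g
  have t3 : tau h = cInt (fun t => h.toFun (t, 0)) := tau_eq h
  have l1 : LA g.toFun (fun t : ℝ => h.toFun (t, 0))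
      = cInt (fun t => g.toFun (h.toFun (t, 0))) - cInt (fun t => h.toFun (t, 0)) := rfl
  have l2 : LA g.toFun (fun t : ℝ => ((t:ℝ), (0:ℝ)))
      = cInt (fun t => g.toFun (t, 0)) - cInt (fun t : ℝ => ((t:ℝ), (0:ℝ))) := rfl
  have l3 := cInt_c0
  linarith [green₁, green₂, t1, t2, t3, l1, l2, l3, LA_const g.toFun ((0:ℝ),(0:ℝ))]

end DTBaux

/-- the curvature of `τ` is basic over `Diff₊(S¹)`: the quantity
`τ(g ∘ h) − τ(g) − τ(h)` depends only on the boundary restrictions of `g` and `h`. -/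
theorem delta_tau_basic (g g' h h' gh g'h' : SympD)
    (hg : FixesOrigin g) (hg' : FixesOrigin g') (hh : FixesOrigin h) (hh' : FixesOrigin h')
    (hbg : ∀ p ∈ Bdry, g.toFun p = g'.toFun p)
    (hbh : ∀ p ∈ Bdry, h.toFun p = h'.toFun p)
    (hcomp : IsComp g h gh) (hcomp' : IsComp g' h' g'h') :
    tau gh - tau g - tau h = tau g'h' - tau g' - tau h' := by
  have hb1 : ((1:ℝ),(0:ℝ)) ∈ Bdry := by
    show (1:ℝ) ^ 2 + (0:ℝ) ^ 2 = 1
    norm_num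
  have hqB : h.toFun (1,0) ∈ Bdry := DTBaux.bdry_mapsTo h hb1
  have hqD : h.toFun (1,0) ∈ Disk := le_of_eq hqB
  obtain ⟨θ, hcos, hsin⟩ := DTBaux.exists_angle hqB
  have hq : h.toFun ((1:ℝ),(0:ℝ)) = h.toFun (1,0) := rfl
  have hq' : h'.toFun ((1:ℝ),(0:ℝ)) = h.toFun (1,0) := (hbh (1,0) hb1).symm
  have d1 := DTBaux.delta_eq g h gh hh (fun p hp => hcomp p hp) hq hqD hcos hsin
  have d2 := DTBaux.delta_eq g' h' g'h' hh' (fun p hp => hcomp' p hp) hq' hqD hcos hsin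
  rw [d1, d2]
  have harcB : ∀ t : ℝ, ((Real.cos (t*θ), Real.sin (t*θ)) : ℝ × ℝ) ∈ Bdry := by
    intro t
    show Real.cos (t*θ) ^ 2 + Real.sin (t*θ) ^ 2 = 1
    rw [Real.cos_sq_add_sin_sq]
  have heq : (fun t : ℝ => g.toFun ((Real.cos (t*θ), Real.sin (t*θ))))
      = fun t : ℝ => g'.toFun ((Real.cos (t*θ), Real.sin (t*θ))) :=
    funext fun t => hbg _ (harcB t)
  unfold DTBaux.LA
  rw [show (fun t : ℝ => g.toFun ((fun t : ℝ => (Real.cos (t*θ), Real.sin (t*θ))) t)) =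
    (fun t : ℝ => g'.toFun ((fun t : ℝ => (Real.cos (t*θ), Real.sin (t*θ))) t)) from heq]
end
end

section
/- For all g, h ∈ G, the ILM cocycle satisfies C_{η,x₀}(g,h) = τ(g ∘ h) − τ(g) − τ(h); that is, the pullback of the ILM cocycle to G equals the coboundary −δτ. -/
open MeasureTheory

noncomputable section

section AuxLemmas

variable {E : Type*} [NormedAddCommGroup E] [NormedSpace ℝ E]

lemma mem_disk {t : ℝ} (h0 : 0 ≤ t) (h1 : t ≤ 1) : ((t, 0) : ℝ × ℝ) ∈ Disk := by
  simp only [Disk, Set.mem_setOf_eq]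
  nlinarith

lemma disk_mem_nhds {t : ℝ} (h0 : 0 ≤ t) (h1 : t < 1) :
    Disk ∈ nhds ((t, 0) : ℝ × ℝ) := by
  have hop : IsOpen {p : ℝ × ℝ | p.1 ^ 2 + p.2 ^ 2 < 1} := by
    have hc : Continuous fun p : ℝ × ℝ => p.1 ^ 2 + p.2 ^ 2 := by fun_prop
    exact isOpen_Iio.preimage hc
  refine Filter.mem_of_superset (hop.mem_nhds ?_) ?_
  · simp only [Set.mem_setOf_eq]; nlinarith
  · intro p hp
    simp only [Set.mem_setOf_eq] at hp
    show p.1 ^ 2 + p.2 ^ 2 ≤ 1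
    exact le_of_lt hp

lemma diffAt_aux {f : ℝ × ℝ → E}
    (hU : ∃ U : Set (ℝ × ℝ), IsOpen U ∧ Disk ⊆ U ∧ ContDiffOn ℝ (⊤ : ℕ∞) f U)
    {p : ℝ × ℝ} (hp : p ∈ Disk) : DifferentiableAt ℝ f p := by
  obtain ⟨U, hUo, hDU, hsm⟩ := hU
  exact (hsm.contDiffAt (hUo.mem_nhds (hDU hp))).differentiableAt (by simp)

lemma cont_fderiv_aux {f : ℝ × ℝ → E}
    (hU : ∃ U : Set (ℝ × ℝ), IsOpen U ∧ Disk ⊆ U ∧ ContDiffOn ℝ (⊤ : ℕ∞) f U) :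
    ContinuousOn (fun p => fderiv ℝ f p) Disk ∧ ContinuousOn f Disk := by
  obtain ⟨U, hUo, hDU, hsm⟩ := hU
  exact ⟨(hsm.continuousOn_fderiv_of_isOpen hUo (by exact_mod_cast le_top)).mono hDU, hsm.continuousOn.mono hDU⟩

lemma curve_mapsTo : Set.MapsTo (fun t : ℝ => ((t, 0) : ℝ × ℝ)) (Set.uIcc 0 1) Disk := by
  intro t ht
  rw [Set.uIcc_of_le (zero_le_one)] at ht
  exact mem_disk ht.1 ht.2

end AuxLemmas
/-- The integrand `t ↦ dF_{h(t,0)}(Dh_{(t,0)}(1,0))`, the derivative of `t ↦ F(h(t,0))`. -/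
def Dfun (F : ℝ × ℝ → ℝ) (h : SympD) (t : ℝ) : ℝ :=
  fderiv ℝ F (h.toFun (t, 0)) (fderiv ℝ h.toFun (t, 0) (1, 0))

/-- The integrand of `tau h`. -/
def Bfun (h : SympD) (t : ℝ) : ℝ :=
  (1 / 2) * ((h.toFun (t, 0)).1 * (fderiv ℝ h.toFun (t, 0) (1, 0)).2
    - (h.toFun (t, 0)).2 * (fderiv ℝ h.toFun (t, 0) (1, 0)).1)
/-- on `G`, the ILM cocycle `C_{η,x₀}(g,h) = F_g(h(x₀))` equals the
coboundary `−δτ`, i.e. `C_{η,x₀}(g,h) = τ(g ∘ h) − τ(g) − τ(h)`. -/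
theorem ILM_eq_delta_tau (g h gh : SympD) (hg : FixesOrigin g) (hh : FixesOrigin h)
    (hcomp : IsComp g h gh) (F : ℝ × ℝ → ℝ) (hF : IsPrimitive g F) :
    F (h.toFun (1, 0)) = tau gh - tau g - tau h := by
  obtain ⟨hFU, hFd, hF0⟩ := hF
  have hFdiff : ∀ p ∈ Disk, DifferentiableAt ℝ F p := fun p hp => diffAt_aux hFU hp
  have hhdiff : ∀ p ∈ Disk, DifferentiableAt ℝ h.toFun p := fun p hp => diffAt_aux h.smooth hp
  have hgdiff : ∀ p ∈ Disk, DifferentiableAt ℝ g.toFun p := fun p hp => diffAt_aux g.smooth hp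
  obtain ⟨hFfc, hFc⟩ := cont_fderiv_aux hFU
  obtain ⟨hhfc, hhc⟩ := cont_fderiv_aux h.smooth
  have hcurve : ∀ t : ℝ, HasDerivAt (fun s : ℝ => ((s, 0) : ℝ × ℝ)) ((1 : ℝ), (0 : ℝ)) t :=
    fun t => (hasDerivAt_id t).prodMk (hasDerivAt_const t 0)
  have hcurvec : Continuous fun t : ℝ => ((t, 0) : ℝ × ℝ) := by fun_prop
  -- Step 1: tau g = -F(0,0)
  have key1 : ∀ t ∈ Set.uIcc (0:ℝ) 1, HasDerivAt (fun s : ℝ => F (s, 0))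
      (fderiv ℝ F (t, 0) (1, 0)) t := by
    intro t ht
    have hp : ((t, 0) : ℝ × ℝ) ∈ Disk := curve_mapsTo ht
    have := ((hFdiff _ hp).hasFDerivAt).comp_hasDerivAt t (hcurve t)
    simpa [Function.comp_def] using this
  have int1 : IntervalIntegrable (fun t => fderiv ℝ F (t, 0) (1, 0)) volume 0 1 :=
    ((hFfc.comp hcurvec.continuousOn curve_mapsTo).clm_apply
      continuousOn_const).intervalIntegrable
  have ftc1 : (∫ t in (0:ℝ)..1, fderiv ℝ F (t, 0) (1, 0)) = F (1, 0) - F (0, 0) :=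
    intervalIntegral.integral_eq_sub_of_hasDerivAt key1 int1
  have htaug : tau g = - F (0, 0) := by
    unfold tau
    rw [intervalIntegral.integral_congr (g := fun t => fderiv ℝ F (t, 0) (1, 0))
      (fun t ht => by
        have hp : ((t, 0) : ℝ × ℝ) ∈ Disk := curve_mapsTo ht
        simp only [hFd _ hp (1, 0)]
        norm_num)]
    rw [ftc1, hF0]
    ring
  -- Step 2: FTC for t ↦ F(h(t,0))
  have hcurveD : ContinuousOn (fun t : ℝ => h.toFun (t, 0)) (Set.uIcc (0:ℝ) 1) :=
    hhc.comp hcurvec.continuousOn curve_mapsTo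
  have hmapsD : Set.MapsTo (fun t : ℝ => h.toFun (t, 0)) (Set.uIcc (0:ℝ) 1) Disk :=
    fun t ht => h.mapsTo (curve_mapsTo ht)
  have hw : ContinuousOn (fun t : ℝ => fderiv ℝ h.toFun (t, 0) ((1 : ℝ), (0 : ℝ)))
      (Set.uIcc (0:ℝ) 1) :=
    (hhfc.comp hcurvec.continuousOn curve_mapsTo).clm_apply continuousOn_const
  have contD : ContinuousOn (Dfun F h) (Set.uIcc (0:ℝ) 1) :=
    (hFfc.comp hcurveD hmapsD).clm_apply hw
  have intD : IntervalIntegrable (Dfun F h) volume 0 1 := contD.intervalIntegrable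
  have keyD : ∀ t ∈ Set.uIcc (0:ℝ) 1,
      HasDerivAt (fun s : ℝ => F (h.toFun (s, 0))) (Dfun F h t) t := by
    intro t ht
    have hp : ((t, 0) : ℝ × ℝ) ∈ Disk := curve_mapsTo ht
    have hq : h.toFun (t, 0) ∈ Disk := h.mapsTo hp
    have h1 : HasDerivAt (fun s : ℝ => h.toFun (s, 0)) (fderiv ℝ h.toFun (t, 0) (1, 0)) t := by
      have := ((hhdiff _ hp).hasFDerivAt).comp_hasDerivAt t (hcurve t)
      simpa [Function.comp_def] using this
    have := ((hFdiff _ hq).hasFDerivAt).comp_hasDerivAt t h1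
    simpa [Function.comp_def, Dfun] using this
  have ftcD : (∫ t in (0:ℝ)..1, Dfun F h t) = F (h.toFun (1, 0)) - F (h.toFun (0, 0)) :=
    intervalIntegral.integral_eq_sub_of_hasDerivAt keyD intD
  -- Step 3: integrability of Bfun h
  have contB : ContinuousOn (Bfun h) (Set.uIcc (0:ℝ) 1) := by
    unfold Bfun
    exact continuousOn_const.mul
      ((hcurveD.fst.mul hw.snd).sub (hcurveD.snd.mul hw.fst))
  have intB : IntervalIntegrable (Bfun h) volume 0 1 := contB.intervalIntegrable
  -- Step 4: pointwise identity on [0,1)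
  have hpt : ∀ t : ℝ, 0 ≤ t → t < 1 →
      (1 / 2) * ((gh.toFun (t, 0)).1 * (fderiv ℝ gh.toFun (t, 0) (1, 0)).2
        - (gh.toFun (t, 0)).2 * (fderiv ℝ gh.toFun (t, 0) (1, 0)).1)
      = Dfun F h t + Bfun h t := by
    intro t h0 h1
    have hp : ((t, 0) : ℝ × ℝ) ∈ Disk := mem_disk h0 h1.le
    have hq : h.toFun (t, 0) ∈ Disk := h.mapsTo hp
    have heq : gh.toFun =ᶠ[nhds ((t, 0) : ℝ × ℝ)] (g.toFun ∘ h.toFun) := by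
      filter_upwards [disk_mem_nhds h0 h1] with p hp'
      exact hcomp p hp'
    have hghval : gh.toFun (t, 0) = g.toFun (h.toFun (t, 0)) := hcomp _ hp
    have hfd : fderiv ℝ gh.toFun (t, 0)
        = (fderiv ℝ g.toFun (h.toFun (t, 0))).comp (fderiv ℝ h.toFun (t, 0)) := by
      rw [heq.fderiv_eq]
      exact fderiv_comp _ (hgdiff _ hq) (hhdiff _ hp)
    have hFval := hFd _ hq (fderiv ℝ h.toFun (t, 0) (1, 0))
    rw [hghval, hfd]
    simp only [ContinuousLinearMap.comp_apply, Dfun, Bfun]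
    rw [hFval]
    ring
  -- Step 5: tau gh = ∫ D + tau h
  have htaugh : tau gh = (∫ t in (0:ℝ)..1, Dfun F h t) + tau h := by
    have hne : ∀ᵐ t : ℝ, t ≠ 1 := by
      rw [MeasureTheory.ae_iff]
      have : {t : ℝ | ¬ t ≠ 1} = {1} := by ext t; simp
      rw [this]
      exact Real.volume_singleton
    have hae : ∀ᵐ t : ℝ, t ∈ Set.uIoc (0:ℝ) 1 →
        (1 / 2) * ((gh.toFun (t, 0)).1 * (fderiv ℝ gh.toFun (t, 0) (1, 0)).2
          - (gh.toFun (t, 0)).2 * (fderiv ℝ gh.toFun (t, 0) (1, 0)).1)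
        = Dfun F h t + Bfun h t := by
      filter_upwards [hne] with t ht1 htmem
      rw [Set.uIoc_of_le zero_le_one] at htmem
      exact hpt t htmem.1.le (lt_of_le_of_ne htmem.2 ht1)
    have e1 : tau gh = ∫ t in (0:ℝ)..1, (Dfun F h t + Bfun h t) := by
      unfold tau
      exact intervalIntegral.integral_congr_ae hae
    rw [e1, intervalIntegral.integral_add intD intB]
    rfl
  have hh' : h.toFun (0, 0) = (0, 0) := hh
  rw [htaugh, htaug, ftcD, hh']
  ring
end
end

section
/- For every h ∈ H_rel, κ(h) = 0. -/
open MeasureTheory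

noncomputable section

/-- for `h ∈ H_rel`, `κ(h) = 0`. -/
theorem kappa_vanishes_on_Hrel (h : SympD) (hh : IsRel h)
    (F : ℝ × ℝ → ℝ) (hF : IsPrimitive h F) :
    kappaOf F = 0 := by
  obtain ⟨⟨U, hUo, hDU, hFsm⟩, hdF, hF0⟩ := hF
  obtain ⟨V, hVo, hDV, hhsm⟩ := h.smooth
  set c : ℝ → ℝ × ℝ := fun θ => (Real.cos θ, Real.sin θ) with hcdef
  have hcB : ∀ θ, c θ ∈ Bdry := by
    intro θ
    simp only [Bdry, Set.mem_setOf_eq, hcdef]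
    exact Real.cos_sq_add_sin_sq θ
  have hcD : ∀ θ, c θ ∈ Disk := fun θ => le_of_eq (hcB θ)
  have hcd : ∀ θ, HasDerivAt c (-Real.sin θ, Real.cos θ) θ := fun θ =>
    (Real.hasDerivAt_cos θ).prodMk (Real.hasDerivAt_sin θ)
  have hFd : ∀ θ, DifferentiableAt ℝ F (c θ) := fun θ =>
    ((hFsm.differentiableOn (by simp)).differentiableAt (hUo.mem_nhds (hDU (hcD θ))))
  have hhd : ∀ θ, DifferentiableAt ℝ h.toFun (c θ) := fun θ =>
    ((hhsm.differentiableOn (by simp)).differentiableAt (hVo.mem_nhds (hDV (hcD θ))))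
  have hfix : ∀ θ, fderiv ℝ h.toFun (c θ) (-Real.sin θ, Real.cos θ)
      = (-Real.sin θ, Real.cos θ) := by
    intro θ
    have h1 : HasDerivAt (h.toFun ∘ c)
        (fderiv ℝ h.toFun (c θ) (-Real.sin θ, Real.cos θ)) θ :=
      (hhd θ).hasFDerivAt.comp_hasDerivAt θ (hcd θ)
    have h2 : h.toFun ∘ c = c := funext fun θ => hh _ (hcB θ)
    rw [h2] at h1
    exact h1.unique (hcd θ)
  have hG0 : ∀ θ, HasDerivAt (F ∘ c) 0 θ := by
    intro θ
    have h1 := (hFd θ).hasFDerivAt.comp_hasDerivAt θ (hcd θ)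
    have h2 := hdF (c θ) (hcD θ) (-Real.sin θ, Real.cos θ)
    rw [hfix θ, hh _ (hcB θ)] at h2
    have hz : fderiv ℝ F (c θ) (-Real.sin θ, Real.cos θ) = 0 := by
      rw [h2]; ring
    rwa [hz] at h1
  have hconst : ∀ θ, F (c θ) = 0 := by
    intro θ
    have := is_const_of_deriv_eq_zero (f := F ∘ c)
      (fun x => (hG0 x).differentiableAt) (fun x => (hG0 x).deriv) θ 0
    simp only [Function.comp] at this
    rw [this]
    simpa [hcdef] using hF0
  have : (fun θ : ℝ => F (Real.cos θ, Real.sin θ)) = fun _ => (0 : ℝ) :=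
    funext fun θ => hconst θ
  simp [kappaOf, this]
end
end

section
/- For all g ∈ H and h ∈ H_rel, κ(g ∘ h) = κ(g) and κ(h ∘ g) = κ(g). -/
open MeasureTheory

noncomputable section

open Topology
lemma circle_mem_bdry (θ : ℝ) : ((Real.cos θ, Real.sin θ) : ℝ × ℝ) ∈ Bdry :=
  Real.cos_sq_add_sin_sq θ

lemma bdry_subset_disk : Bdry ⊆ Disk := fun _ hp => le_of_eq hp

lemma circle_mem_disk (θ : ℝ) : ((Real.cos θ, Real.sin θ) : ℝ × ℝ) ∈ Disk :=
  bdry_subset_disk (circle_mem_bdry θ)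

lemma SympD.diffAt (g : SympD) {p : ℝ × ℝ} (hp : p ∈ Disk) :
    DifferentiableAt ℝ g.toFun p := by
  obtain ⟨U, hUo, hUD, hsm⟩ := g.smooth
  exact (hsm.contDiffAt (hUo.mem_nhds (hUD hp))).differentiableAt (by simp)

/-- A symplectomorphism of the disk maps the boundary circle into itself. -/
lemma SympD.bdry_mem (g : SympD) {p : ℝ × ℝ} (hp : p ∈ Bdry) : g.toFun p ∈ Bdry := by
  have hpD : p ∈ Disk := bdry_subset_disk hp
  by_contra hq
  set q := g.toFun p with hqdef
  have hqD : q ∈ Disk := g.mapsTo hpD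
  have hqlt : q.1 ^ 2 + q.2 ^ 2 < 1 := lt_of_le_of_ne hqD hq
  set V : Set (ℝ × ℝ) := {r | r.1 ^ 2 + r.2 ^ 2 < 1} with hVdef
  have hVopen : IsOpen V :=
    isOpen_lt (by fun_prop) continuous_const
  have hVD : V ⊆ Disk := fun r (hr : r.1 ^ 2 + r.2 ^ 2 < 1) => le_of_lt hr
  have hVnhds : V ∈ 𝓝 q := hVopen.mem_nhds hqlt
  obtain ⟨U, hUo, hUD, hsm⟩ := g.invSmooth
  have hCD : ContDiffAt ℝ (⊤ : ℕ∞) g.invFun q := hsm.contDiffAt (hUo.mem_nhds (hUD hqD))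
  have hinvdiff : DifferentiableAt ℝ g.invFun q := hCD.differentiableAt (by simp)
  have hstrict : HasStrictFDerivAt g.invFun (fderiv ℝ g.invFun q) q :=
    hCD.hasStrictFDerivAt (by simp)
  have hinvq : g.invFun q = p := g.leftInv p hpD
  have hdiffg : DifferentiableAt ℝ g.toFun (g.invFun q) := by
    rw [hinvq]; exact g.diffAt hpD
  have hcomp_eq : (fun r => g.toFun (g.invFun r)) =ᶠ[𝓝 q] id :=
    Filter.eventuallyEq_of_mem hVnhds (fun r hr => g.rightInv r (hVD hr))
  have hAB : (fderiv ℝ g.toFun (g.invFun q)).comp (fderiv ℝ g.invFun q)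
      = ContinuousLinearMap.id ℝ (ℝ × ℝ) := by
    have h1 : fderiv ℝ (fun r => g.toFun (g.invFun r)) q = fderiv ℝ (id : ℝ × ℝ → ℝ × ℝ) q :=
      hcomp_eq.fderiv_eq
    rw [fderiv_id] at h1
    have h2 := fderiv_comp q hdiffg hinvdiff
    rw [← h1]
    exact h2.symm
  have hABv : ∀ v, fderiv ℝ g.toFun (g.invFun q) (fderiv ℝ g.invFun q v) = v := by
    intro v
    have := ContinuousLinearMap.ext_iff.mp hAB v
    simpa using this
  have hBinj : Function.Injective (fderiv ℝ g.invFun q) := by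
    intro v w hvw
    rw [← hABv v, ← hABv w, hvw]
  have hBbij : Function.Bijective ((fderiv ℝ g.invFun q) : (ℝ × ℝ) →ₗ[ℝ] (ℝ × ℝ)) :=
    ⟨hBinj, LinearMap.injective_iff_surjective.mp hBinj⟩
  set E := LinearEquiv.ofBijective ((fderiv ℝ g.invFun q) : (ℝ × ℝ) →ₗ[ℝ] (ℝ × ℝ)) hBbij
    with hEdef
  have hE : (E.toContinuousLinearEquiv : (ℝ × ℝ) →L[ℝ] (ℝ × ℝ)) = fderiv ℝ g.invFun q := by
    rfl
  have hstrict' :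
      HasStrictFDerivAt g.invFun (E.toContinuousLinearEquiv : (ℝ × ℝ) →L[ℝ] (ℝ × ℝ)) q := by
    rw [hE]; exact hstrict
  have hmap : Filter.map g.invFun (𝓝 q) = 𝓝 (g.invFun q) := hstrict'.map_nhds_eq_of_equiv
  have hDisk_nhds : Disk ∈ 𝓝 p := by
    rw [← hinvq, ← hmap]
    refine Filter.mem_of_superset (Filter.image_mem_map hVnhds) ?_
    rintro r ⟨s, hs, rfl⟩
    exact g.invMapsTo (hVD hs)
  have htend : Filter.Tendsto (fun t : ℝ => ((t * p.1, t * p.2) : ℝ × ℝ)) (𝓝[>] 1) (𝓝 p) := by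
    have hc : Continuous (fun t : ℝ => ((t * p.1, t * p.2) : ℝ × ℝ)) := by fun_prop
    have := hc.tendsto' 1 p (by simp)
    exact this.mono_left nhdsWithin_le_nhds
  have hev : ∀ᶠ t in 𝓝[>] (1:ℝ), ((t * p.1, t * p.2) : ℝ × ℝ) ∈ Disk :=
    htend.eventually (hDisk_nhds : ∀ᶠ x in 𝓝 p, x ∈ Disk)
  obtain ⟨t, htD, ht1⟩ := (hev.and self_mem_nhdsWithin).exists
  have hp1 : p.1 ^ 2 + p.2 ^ 2 = 1 := hp
  have ht1' : (1:ℝ) < t := ht1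
  have htD' : (t * p.1) ^ 2 + (t * p.2) ^ 2 ≤ 1 := htD
  have hexp : (t * p.1) ^ 2 + (t * p.2) ^ 2 = t ^ 2 * (p.1 ^ 2 + p.2 ^ 2) := by ring
  rw [hp1, mul_one] at hexp
  nlinarith [ht1', htD', hexp]

/-- If two symplectomorphisms agree on the boundary circle, their primitives agree
there too, hence have equal `κ`. -/
lemma kappa_eq_of_bdry_eq (s t : SympD) (Fs Ft : ℝ × ℝ → ℝ)
    (hFs : IsPrimitive s Fs) (hFt : IsPrimitive t Ft)
    (hb : ∀ θ : ℝ, s.toFun (Real.cos θ, Real.sin θ) = t.toFun (Real.cos θ, Real.sin θ)) :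
    kappaOf Fs = kappaOf Ft := by
  obtain ⟨⟨Us, hUso, hUsD, hUssm⟩, hds, hFs0⟩ := hFs
  obtain ⟨⟨Ut, hUto, hUtD, hUtsm⟩, hdt, hFt0⟩ := hFt
  have hγderiv : ∀ θ : ℝ, HasDerivAt (fun θ : ℝ => ((Real.cos θ, Real.sin θ) : ℝ × ℝ))
      ((-Real.sin θ, Real.cos θ) : ℝ × ℝ) θ := fun θ =>
    HasDerivAt.prodMk (Real.hasDerivAt_cos θ) (Real.hasDerivAt_sin θ)
  have hDst : ∀ θ : ℝ, fderiv ℝ s.toFun (Real.cos θ, Real.sin θ) (-Real.sin θ, Real.cos θ)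
      = fderiv ℝ t.toFun (Real.cos θ, Real.sin θ) (-Real.sin θ, Real.cos θ) := by
    intro θ
    have h1 : HasDerivAt (fun θ : ℝ => s.toFun (Real.cos θ, Real.sin θ))
        (fderiv ℝ s.toFun (Real.cos θ, Real.sin θ) (-Real.sin θ, Real.cos θ)) θ :=
      HasFDerivAt.comp_hasDerivAt θ (s.diffAt (circle_mem_disk θ)).hasFDerivAt (hγderiv θ)
    have h2 : HasDerivAt (fun θ : ℝ => t.toFun (Real.cos θ, Real.sin θ))
        (fderiv ℝ t.toFun (Real.cos θ, Real.sin θ) (-Real.sin θ, Real.cos θ)) θ :=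
      HasFDerivAt.comp_hasDerivAt θ (t.diffAt (circle_mem_disk θ)).hasFDerivAt (hγderiv θ)
    have heq : (fun θ : ℝ => s.toFun (Real.cos θ, Real.sin θ))
        = fun θ : ℝ => t.toFun (Real.cos θ, Real.sin θ) := funext hb
    exact h1.unique (heq ▸ h2)
  have hdiffFs : ∀ θ : ℝ, DifferentiableAt ℝ Fs (Real.cos θ, Real.sin θ) := fun θ =>
    (hUssm.contDiffAt (hUso.mem_nhds (hUsD (circle_mem_disk θ)))).differentiableAt (by simp)
  have hdiffFt : ∀ θ : ℝ, DifferentiableAt ℝ Ft (Real.cos θ, Real.sin θ) := fun θ =>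
    (hUtsm.contDiffAt (hUto.mem_nhds (hUtD (circle_mem_disk θ)))).differentiableAt (by simp)
  have hudiff : ∀ θ : ℝ, HasDerivAt
      (fun θ : ℝ => Fs (Real.cos θ, Real.sin θ) - Ft (Real.cos θ, Real.sin θ)) 0 θ := by
    intro θ
    have h1 : HasDerivAt (fun θ : ℝ => Fs (Real.cos θ, Real.sin θ))
        (fderiv ℝ Fs (Real.cos θ, Real.sin θ) (-Real.sin θ, Real.cos θ)) θ :=
      HasFDerivAt.comp_hasDerivAt θ (hdiffFs θ).hasFDerivAt (hγderiv θ)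
    have h2 : HasDerivAt (fun θ : ℝ => Ft (Real.cos θ, Real.sin θ))
        (fderiv ℝ Ft (Real.cos θ, Real.sin θ) (-Real.sin θ, Real.cos θ)) θ :=
      HasFDerivAt.comp_hasDerivAt θ (hdiffFt θ).hasFDerivAt (hγderiv θ)
    have h := h1.sub h2
    refine h.congr_deriv ?_
    rw [hds _ (circle_mem_disk θ), hdt _ (circle_mem_disk θ), hDst θ, hb θ]
    ring
  have hconst : ∀ θ : ℝ,
      Fs (Real.cos θ, Real.sin θ) - Ft (Real.cos θ, Real.sin θ)
        = Fs (Real.cos 0, Real.sin 0) - Ft (Real.cos 0, Real.sin 0) := fun θ =>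
    is_const_of_deriv_eq_zero (fun x => (hudiff x).differentiableAt)
      (fun x => (hudiff x).deriv) θ 0
  have hbdryF : ∀ θ : ℝ, Fs (Real.cos θ, Real.sin θ) = Ft (Real.cos θ, Real.sin θ) := by
    intro θ
    have := hconst θ
    rw [Real.cos_zero, Real.sin_zero, hFs0, hFt0] at this
    linarith
  unfold kappaOf
  congr 1
  exact intervalIntegral.integral_congr (fun θ _ => hbdryF θ)

/-- for `g ∈ H` and `h ∈ H_rel`, `κ(g ∘ h) = κ(g)` and `κ(h ∘ g) = κ(g)`. -/
theorem kappa_comp_rel (g h gh hg' : SympD) (hh : IsRel h)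
    (hcomp : IsComp g h gh) (hcomp' : IsComp h g hg')
    (Fg Fgh Fhg : ℝ × ℝ → ℝ)
    (hFg : IsPrimitive g Fg) (hFgh : IsPrimitive gh Fgh) (hFhg : IsPrimitive hg' Fhg) :
    kappaOf Fgh = kappaOf Fg ∧ kappaOf Fhg = kappaOf Fg := by
  constructor
  · refine kappa_eq_of_bdry_eq gh g Fgh Fg hFgh hFg (fun θ => ?_)
    rw [hcomp _ (circle_mem_disk θ), hh _ (circle_mem_bdry θ)]
  · refine kappa_eq_of_bdry_eq hg' g Fhg Fg hFhg hFg (fun θ => ?_)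
    rw [hcomp' _ (circle_mem_disk θ)]
    exact hh _ (g.bdry_mem (circle_mem_bdry θ))
end
end

section
/- For all g, h ∈ H, τ'(g ∘ h) − τ'(g) − τ'(h) = π·C_{η,x₀}(g,h), where τ' = τ₀ + κ; that is, the ILM cocycle on the disk is the coboundary −δτ' divided by π. -/
open MeasureTheory

noncomputable section

open Set
open Set in
def OpenDisk : Set (ℝ × ℝ) := {p | p.1 ^ 2 + p.2 ^ 2 < 1}

lemma openDisk_isOpen : IsOpen OpenDisk :=
  isOpen_lt (by fun_prop) continuous_const

lemma openDisk_subset : OpenDisk ⊆ Disk := fun p hp => le_of_lt (show p.1^2+p.2^2 < 1 from hp)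

lemma disk_isClosed : IsClosed Disk :=
  isClosed_le (by fun_prop) continuous_const

lemma disk_measurable : MeasurableSet Disk := disk_isClosed.measurableSet

lemma disk_compact : IsCompact Disk := by
  refine IsCompact.of_isClosed_subset (isCompact_Icc (a := ((-1:ℝ),(-1:ℝ))) (b := ((1:ℝ),(1:ℝ)))) disk_isClosed ?_
  intro p hp
  have hp' : p.1 ^ 2 + p.2 ^ 2 ≤ 1 := hp
  have h1 : p.1 ^ 2 ≤ 1 := by nlinarith [sq_nonneg p.2]
  have h2 : p.2 ^ 2 ≤ 1 := by nlinarith [sq_nonneg p.1]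
  refine ⟨⟨?_, ?_⟩, ?_, ?_⟩ <;> show _ ≤ _ <;> dsimp only <;> nlinarith

lemma disk_convex : Convex ℝ Disk := by
  intro p hp q hq a b ha hb hab
  simp only [Disk, mem_setOf_eq] at *
  have h1 : (a • p + b • q).1 = a * p.1 + b * q.1 := rfl
  have h2 : (a • p + b • q).2 = a * p.2 + b * q.2 := rfl
  rw [h1, h2]
  nlinarith [mul_nonneg (mul_nonneg ha hb) (sq_nonneg (p.1 - q.1)),
    mul_nonneg (mul_nonneg ha hb) (sq_nonneg (p.2 - q.2)),
    mul_le_mul_of_nonneg_left hp ha, mul_le_mul_of_nonneg_left hq hb]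

lemma zero_mem_interior_disk : (0, 0) ∈ interior Disk := by
  have : OpenDisk ⊆ interior Disk := interior_maximal openDisk_subset openDisk_isOpen
  exact this (by simp [OpenDisk])

lemma disk_uniqueDiffOn : UniqueDiffOn ℝ Disk :=
  uniqueDiffOn_convex disk_convex ⟨_, zero_mem_interior_disk⟩

lemma disk_subset_closure_openDisk : Disk ⊆ closure OpenDisk := by
  intro p hp
  have : Filter.Tendsto (fun n : ℕ => ((1 - ((n:ℝ)+1)⁻¹) • p : ℝ × ℝ)) Filter.atTop (nhds p) := by
    have h1 : Filter.Tendsto (fun n : ℕ => (1 - ((n:ℝ)+1)⁻¹)) Filter.atTop (nhds 1) := by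
      have h0 : Filter.Tendsto (fun n : ℕ => ((n:ℝ)+1)⁻¹) Filter.atTop (nhds 0) := by
        simpa [one_div] using tendsto_one_div_add_atTop_nhds_zero_nat (𝕜 := ℝ)
      simpa using (tendsto_const_nhds (x := (1:ℝ)) (f := Filter.atTop (α := ℕ))).sub h0
    simpa using (h1.smul tendsto_const_nhds : Filter.Tendsto _ _ (nhds ((1:ℝ) • p)))
  refine mem_closure_of_tendsto this (Filter.Eventually.of_forall fun n => ?_)
  have hn : (0:ℝ) < ((n:ℝ)+1)⁻¹ := by positivity
  have hn1 : ((n:ℝ)+1)⁻¹ ≤ 1 := by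
    rw [inv_le_one_iff₀]; right; linarith [Nat.cast_nonneg (α := ℝ) n]
  have ht0 : (0:ℝ) ≤ 1 - ((n:ℝ)+1)⁻¹ := by linarith
  have ht1 : (1 - ((n:ℝ)+1)⁻¹) < 1 := by linarith
  simp only [OpenDisk, mem_setOf_eq, Prod.smul_fst, Prod.smul_snd, smul_eq_mul]
  have hd : p.1^2 + p.2^2 ≤ 1 := hp
  have hsq : (1 - ((n:ℝ)+1)⁻¹)^2 < 1 := by nlinarith
  nlinarith [sq_nonneg p.1, sq_nonneg p.2, mul_pos hn hn]
-- helpers around smoothness on open neighborhoods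
section helpers
variable {E F : Type*} [NormedAddCommGroup E] [NormedSpace ℝ E] [NormedAddCommGroup F] [NormedSpace ℝ F]

lemma diffAt_of_contDiffOn {f : E → F} {U : Set E} (hU : IsOpen U) (hf : ContDiffOn ℝ (⊤:ℕ∞) f U)
    {p : E} (hp : p ∈ U) : DifferentiableAt ℝ f p := by
  have := (hf p hp).contDiffAt (hU.mem_nhds hp)
  exact this.differentiableAt (by simp)

lemma contAt_fderiv_of_contDiffOn {f : E → F} {U : Set E} (hU : IsOpen U)
    (hf : ContDiffOn ℝ (⊤:ℕ∞) f U) {p : E} (hp : p ∈ U) :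
    ContinuousAt (fderiv ℝ f) p :=
  (hf.continuousOn_fderiv_of_isOpen hU (by exact_mod_cast le_top)).continuousAt (hU.mem_nhds hp)

end helpers

/-- Two functions smooth near `Disk` agreeing on `Disk` have equal `fderiv` on `Disk`. -/
lemma fderiv_eqOn_disk {F : Type*} [NormedAddCommGroup F] [NormedSpace ℝ F]
    {f₁ f₂ : ℝ × ℝ → F} {U : Set (ℝ × ℝ)} (hU : IsOpen U) (hDU : Disk ⊆ U)
    (h₁ : ContDiffOn ℝ (⊤:ℕ∞) f₁ U) (h₂ : ContDiffOn ℝ (⊤:ℕ∞) f₂ U)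
    (heq : Set.EqOn f₁ f₂ Disk) : ∀ p ∈ Disk, fderiv ℝ f₁ p = fderiv ℝ f₂ p := by
  have hOD : OpenDisk ⊆ U := fun q hq => hDU (openDisk_subset hq)
  have hint : ∀ q ∈ OpenDisk, fderiv ℝ f₁ q = fderiv ℝ f₂ q := by
    intro q hq
    apply Filter.EventuallyEq.fderiv_eq
    exact Filter.eventuallyEq_of_mem (openDisk_isOpen.mem_nhds hq)
      (fun x hx => heq (openDisk_subset hx))
  intro p hp
  have hne : (nhdsWithin p OpenDisk).NeBot :=
    mem_closure_iff_nhdsWithin_neBot.mp (disk_subset_closure_openDisk hp)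
  have t1 : Filter.Tendsto (fderiv ℝ f₁) (nhdsWithin p OpenDisk) (nhds (fderiv ℝ f₁ p)) :=
    ((contAt_fderiv_of_contDiffOn hU h₁ (hDU hp)).tendsto).mono_left nhdsWithin_le_nhds
  have t2 : Filter.Tendsto (fderiv ℝ f₂) (nhdsWithin p OpenDisk) (nhds (fderiv ℝ f₂ p)) :=
    ((contAt_fderiv_of_contDiffOn hU h₂ (hDU hp)).tendsto).mono_left nhdsWithin_le_nhds
  exact tendsto_nhds_unique (t1.congr' (Filter.eventuallyEq_of_mem self_mem_nhdsWithin hint)) t2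
lemma one_zero_mem_disk : ((1:ℝ), (0:ℝ)) ∈ Disk := by norm_num [Disk]

/-- the cocycle identity for primitives -/
lemma cocycle (g h gh : SympD) (hcomp : IsComp g h gh)
    (Fg Fh Fgh : ℝ × ℝ → ℝ) (hFg : IsPrimitive g Fg) (hFh : IsPrimitive h Fh)
    (hFgh : IsPrimitive gh Fgh) :
    ∀ p ∈ Disk, Fgh p = Fg (h.toFun p) + Fh p - Fg (h.toFun (1, 0)) := by
  obtain ⟨Ug, hUgo, hDUg, hgs⟩ := g.smooth
  obtain ⟨Uh, hUho, hDUh, hhs⟩ := h.smooth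
  obtain ⟨Ugh, hUgho, hDUgh, hghs⟩ := gh.smooth
  obtain ⟨⟨Vg, hVgo, hDVg, hFgs⟩, hdFg, hFg0⟩ := hFg
  obtain ⟨⟨Vh, hVho, hDVh, hFhs⟩, hdFh, hFh0⟩ := hFh
  obtain ⟨⟨Vgh, hVgho, hDVgh, hFghs⟩, hdFgh, hFgh0⟩ := hFgh
  -- the open set where both `gh.toFun` and `g ∘ h` are smooth
  set W : Set (ℝ × ℝ) := Ugh ∩ (Uh ∩ h.toFun ⁻¹' Ug) with hW
  have hWo : IsOpen W := hUgho.inter (hhs.continuousOn.isOpen_inter_preimage hUho hUgo)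
  have hDW : Disk ⊆ W := fun p hp => ⟨hDUgh hp, hDUh hp, hDUg (h.mapsTo hp)⟩
  have hghW : ContDiffOn ℝ (⊤:ℕ∞) gh.toFun W := hghs.mono (Set.inter_subset_left)
  have hcompW : ContDiffOn ℝ (⊤:ℕ∞) (g.toFun ∘ h.toFun) W := by
    refine hgs.comp (hhs.mono ?_) ?_
    · exact fun q hq => hq.2.1
    · exact fun q hq => hq.2.2
  -- the fderivs agree on Disk
  have hfd : ∀ p ∈ Disk, fderiv ℝ gh.toFun p = fderiv ℝ (g.toFun ∘ h.toFun) p :=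
    fderiv_eqOn_disk hWo hDW hghW hcompW (fun p hp => hcomp p hp)
  -- differentiability facts
  have hdiffh : ∀ p ∈ Disk, DifferentiableAt ℝ h.toFun p :=
    fun p hp => diffAt_of_contDiffOn hUho hhs (hDUh hp)
  have hdiffg : ∀ q ∈ Disk, DifferentiableAt ℝ g.toFun q :=
    fun q hq => diffAt_of_contDiffOn hUgo hgs (hDUg hq)
  have hdiffFg : ∀ q ∈ Disk, DifferentiableAt ℝ Fg q :=
    fun q hq => diffAt_of_contDiffOn hVgo hFgs (hDVg hq)
  have hdiffFh : ∀ p ∈ Disk, DifferentiableAt ℝ Fh p :=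
    fun p hp => diffAt_of_contDiffOn hVho hFhs (hDVh hp)
  have hdiffFgh : ∀ p ∈ Disk, DifferentiableAt ℝ Fgh p :=
    fun p hp => diffAt_of_contDiffOn hVgho hFghs (hDVgh hp)
  -- the function G
  set G : ℝ × ℝ → ℝ := fun p => Fgh p - ((Fg ∘ h.toFun) p + Fh p) with hG
  have hdiffG : ∀ p ∈ Disk, DifferentiableAt ℝ G p := by
    intro p hp
    exact (hdiffFgh p hp).sub (((hdiffFg _ (h.mapsTo hp)).comp p (hdiffh p hp)).add (hdiffFh p hp))
  have hfderivG : ∀ p ∈ Disk, fderiv ℝ G p = 0 := by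
    intro p hp
    have hq : h.toFun p ∈ Disk := h.mapsTo hp
    have e1 : fderiv ℝ G p = fderiv ℝ Fgh p - (fderiv ℝ (Fg ∘ h.toFun) p + fderiv ℝ Fh p) := by
      rw [hG]
      rw [fderiv_fun_sub (hdiffFgh p hp) (((hdiffFg _ hq).comp p (hdiffh p hp)).fun_add (hdiffFh p hp)),
        fderiv_fun_add ((hdiffFg _ hq).comp p (hdiffh p hp)) (hdiffFh p hp)]
    have e2 : fderiv ℝ (Fg ∘ h.toFun) p = (fderiv ℝ Fg (h.toFun p)).comp (fderiv ℝ h.toFun p) :=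
      fderiv_comp p (hdiffFg _ hq) (hdiffh p hp)
    refine ContinuousLinearMap.ext fun v => ?_
    have e3 : fderiv ℝ gh.toFun p v = fderiv ℝ g.toFun (h.toFun p) (fderiv ℝ h.toFun p v) := by
      rw [hfd p hp, fderiv_comp p (hdiffg _ hq) (hdiffh p hp)]; rfl
    have e4 := hdFgh p hp v
    have e5 := hdFg (h.toFun p) hq (fderiv ℝ h.toFun p v)
    have e6 := hdFh p hp v
    have e7 : gh.toFun p = g.toFun (h.toFun p) := hcomp p hp
    simp only [e1, ContinuousLinearMap.sub_apply, ContinuousLinearMap.add_apply, e2,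
      ContinuousLinearMap.comp_apply, ContinuousLinearMap.zero_apply]
    rw [e4, e5, e6, e3, e7]
    ring
  -- G is constant on Disk
  have hconst : ∀ p ∈ Disk, G p = G (1, 0) := by
    intro p hp
    have hdo : DifferentiableOn ℝ G Disk := fun x hx => (hdiffG x hx).differentiableWithinAt
    have bound : ∀ x ∈ Disk, ‖fderivWithin ℝ G Disk x‖ ≤ 0 := by
      intro x hx
      rw [(hdiffG x hx).fderivWithin (disk_uniqueDiffOn x hx), hfderivG x hx]
      simp
    have := disk_convex.norm_image_sub_le_of_norm_fderivWithin_le hdo bound one_zero_mem_disk hp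
    simp only [zero_mul, norm_le_zero_iff, sub_eq_zero] at this
    exact this
  intro p hp
  have h10 := hconst p hp
  simp only [hG, Function.comp_apply, hFgh0, hFh0] at h10
  linarith [h10]
lemma det_fderiv_eq_one (h : SympD) {U : Set (ℝ × ℝ)} (hUo : IsOpen U) (hDU : Disk ⊆ U)
    (hhs : ContDiffOn ℝ (⊤:ℕ∞) h.toFun U) {p : ℝ × ℝ} (hp : p ∈ Disk) :
    (fderiv ℝ h.toFun p).det = 1 := by
  set A := fderiv ℝ h.toFun p with hA
  have harea := h.areaPreserving p hp
  have : ContinuousLinearMap.det A = LinearMap.det (A : ℝ × ℝ →ₗ[ℝ] ℝ × ℝ) := rfl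
  rw [ContinuousLinearMap.det]
  rw [← LinearMap.det_toMatrix (Module.Basis.finTwoProd ℝ)]
  rw [Matrix.det_fin_two]
  simp only [LinearMap.toMatrix_apply, Module.Basis.finTwoProd_zero, Module.Basis.finTwoProd_one,
    Module.Basis.coe_finTwoProd_repr, ContinuousLinearMap.coe_coe]
  simpa using harea
/-- change of variables: integrating `F ∘ h` over the disk equals integrating `F`. -/
lemma integral_comp_sympD (h : SympD) (F : ℝ × ℝ → ℝ) :
    ∫ p in Disk, F (h.toFun p) = ∫ p in Disk, F p := by
  obtain ⟨U, hUo, hDU, hhs⟩ := h.smooth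
  have himg : h.toFun '' Disk = Disk := by
    apply Set.Subset.antisymm
    · exact Set.image_subset_iff.mpr (fun p hp => h.mapsTo hp)
    · intro q hq
      exact ⟨h.invFun q, h.invMapsTo hq, h.rightInv q hq⟩
  have hinj : Set.InjOn h.toFun Disk := by
    intro a ha b hb hab
    have := h.leftInv a ha
    rw [hab, h.leftInv b hb] at this
    exact this.symm
  have hfd : ∀ p ∈ Disk, HasFDerivWithinAt h.toFun (fderiv ℝ h.toFun p) Disk p :=
    fun p hp => (diffAt_of_contDiffOn hUo hhs (hDU hp)).hasFDerivAt.hasFDerivWithinAt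
  have := integral_image_eq_integral_abs_det_fderiv_smul volume disk_measurable hfd hinj F
  rw [himg] at this
  rw [this]
  apply setIntegral_congr_fun disk_measurable
  intro p hp
  simp [det_fderiv_eq_one h hUo hDU hhs hp]
open Real in
/-- Stokes / Green theorem on the unit disk for the 1-form `F η`. -/
lemma stokes_disk (F : ℝ × ℝ → ℝ) (U : Set (ℝ × ℝ)) (hUo : IsOpen U) (hDU : Disk ⊆ U)
    (hFs : ContDiffOn ℝ (⊤:ℕ∞) F U) :
    ∫ p in Disk, ((1/2) * (p.1 * fderiv ℝ F p (1,0) + p.2 * fderiv ℝ F p (0,1)) + F p)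
      = (1/2) * ∫ θ in (0:ℝ)..(2*Real.pi), F (Real.cos θ, Real.sin θ) := by
  set curl : ℝ × ℝ → ℝ :=
    fun p => (1/2) * (p.1 * fderiv ℝ F p (1,0) + p.2 * fderiv ℝ F p (0,1)) + F p with hcurl
  have hFc : ContinuousOn F U := hFs.continuousOn
  have hfdc : ContinuousOn (fderiv ℝ F) U :=
    hFs.continuousOn_fderiv_of_isOpen hUo (by exact_mod_cast le_top)
  have hcurlc : ContinuousOn curl U := by
    apply ContinuousOn.add ?_ hFc
    apply continuousOn_const.mul
    exact (continuousOn_fst.mul (hfdc.clm_apply continuousOn_const)).add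
      (continuousOn_snd.mul (hfdc.clm_apply continuousOn_const))
  -- the map to polar coordinates
  set φ : ℝ × ℝ → ℝ × ℝ := fun q => (q.1 * Real.cos q.2, q.1 * Real.sin q.2) with hφ
  have hφc : Continuous φ := by fun_prop
  have hsymm : ⇑polarCoord.symm = φ := rfl
  have htarget : polarCoord.target = Set.Ioi (0:ℝ) ×ˢ Set.Ioo (-π) π := rfl
  -- the integrand in polar coordinates
  set g : ℝ × ℝ → ℝ := fun q => q.1 * curl (φ q) with hg
  -- φ maps the unit square-ish region into the disk
  have hφD : ∀ q : ℝ × ℝ, |q.1| ≤ 1 → φ q ∈ Disk := by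
    intro q hq
    show (q.1 * Real.cos q.2)^2 + (q.1 * Real.sin q.2)^2 ≤ 1
    have h1 : (q.1 * Real.cos q.2)^2 + (q.1 * Real.sin q.2)^2 = q.1^2 := by
      have := Real.sin_sq_add_cos_sq q.2; nlinarith [this]
    rw [h1]; rw [abs_le] at hq; nlinarith
  -- continuity of g on the compact box
  have hgc : ContinuousOn g (Set.Icc (0:ℝ) 1 ×ˢ Set.Icc (-π) π) := by
    apply continuousOn_fst.mul
    apply hcurlc.comp hφc.continuousOn
    intro q hq
    apply hDU
    apply hφD
    have := hq.1
    rw [abs_le]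
    exact ⟨by linarith [this.1], this.2⟩
  have hgint : IntegrableOn g (Set.Ioc (0:ℝ) 1 ×ˢ Set.Ioo (-π) π) := by
    apply (hgc.integrableOn_compact (isCompact_Icc.prod isCompact_Icc)).mono_set
    exact Set.prod_mono Set.Ioc_subset_Icc_self Set.Ioo_subset_Icc_self
  -- Step 1 : polar change of variables
  have step1 : ∫ p in Disk, curl p = ∫ q in Set.Ioc (0:ℝ) 1 ×ˢ Set.Ioo (-π) π, g q := by
    rw [← integral_indicator disk_measurable]
    rw [← integral_comp_polarCoord_symm (Disk.indicator curl)]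
    have e1 : (fun q : ℝ × ℝ => q.1 • Disk.indicator curl (polarCoord.symm q))
        = (φ ⁻¹' Disk).indicator g := by
      funext q
      rw [hsymm]
      by_cases hm : φ q ∈ Disk
      · rw [Set.indicator_of_mem hm, Set.indicator_of_mem (by exact hm)]
        rw [smul_eq_mul]
      · rw [Set.indicator_of_notMem hm, Set.indicator_of_notMem (by exact hm)]
        exact smul_zero _
    have hseteq : Set.Ioi (0:ℝ) ×ˢ Set.Ioo (-π) π ∩ φ ⁻¹' Disk
        = Set.Ioc (0:ℝ) 1 ×ˢ Set.Ioo (-π) π := by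
      ext q
      constructor
      · rintro ⟨hq, hmem⟩
        obtain ⟨hr, hθ⟩ : q.1 ∈ Ioi (0:ℝ) ∧ q.2 ∈ Ioo (-π) π := hq
        have hd : (q.1 * Real.cos q.2)^2 + (q.1 * Real.sin q.2)^2 ≤ 1 := hmem
        have h1 : q.1^2 ≤ 1 := by nlinarith [Real.sin_sq_add_cos_sq q.2]
        have hr' : (0:ℝ) < q.1 := hr
        exact ⟨⟨hr', by nlinarith⟩, hθ⟩
      · rintro ⟨hq1, hθ⟩
        obtain ⟨hr, hr1⟩ : 0 < q.1 ∧ q.1 ≤ 1 := hq1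
        refine ⟨⟨hr, hθ⟩, hφD q ?_⟩
        rw [abs_le]; exact ⟨by linarith, hr1⟩
    rw [e1, setIntegral_indicator (disk_measurable.preimage hφc.measurable), htarget, hseteq]
  -- Step 2 : Fubini, θ outer
  have step2 : ∫ q in Set.Ioc (0:ℝ) 1 ×ˢ Set.Ioo (-π) π, g q
      = ∫ θ in Set.Ioo (-π) π, ∫ r in Set.Ioc (0:ℝ) 1, g (r, θ) := by
    have hgint2 : Integrable g
        ((volume.restrict (Set.Ioc (0:ℝ) 1)).prod (volume.restrict (Set.Ioo (-π) π))) := by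
      rw [Measure.prod_restrict, ← Measure.volume_eq_prod]
      exact hgint
    rw [Measure.volume_eq_prod, ← Measure.prod_restrict]
    exact integral_prod_symm g hgint2
  -- Step 3 : inner FTC
  have step3 : ∀ θ : ℝ, ∫ r in Set.Ioc (0:ℝ) 1, g (r, θ) = F (Real.cos θ, Real.sin θ) * (1/2) := by
    intro θ
    set c := Real.cos θ with hc
    set s := Real.sin θ with hs
    have hderiv : ∀ r ∈ Set.uIcc (0:ℝ) 1,
        HasDerivAt (fun r => F (r * c, r * s) * (r^2/2)) (g (r, θ)) r := by
      intro r hr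
      rw [Set.uIcc_of_le (by norm_num)] at hr
      have hmem : ((r*c, r*s) : ℝ × ℝ) ∈ Disk := by
        apply hφD (r, θ)
        have h1 : |r| ≤ 1 := by rw [abs_le]; exact ⟨by linarith [hr.1], hr.2⟩
        exact h1
      have hψ : HasDerivAt (fun r : ℝ => ((r * c, r * s) : ℝ × ℝ)) ((c, s)) r := by
        simpa using ((hasDerivAt_id r).mul_const c).prodMk ((hasDerivAt_id r).mul_const s)
      have hFd : HasFDerivAt F (fderiv ℝ F (r*c, r*s)) ((r*c, r*s)) :=
        (diffAt_of_contDiffOn hUo hFs (hDU hmem)).hasFDerivAt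
      have h1 : HasDerivAt (fun r : ℝ => F (r * c, r * s)) (fderiv ℝ F (r*c, r*s) (c, s)) r :=
        hFd.comp_hasDerivAt r hψ
      have h2 : HasDerivAt (fun r : ℝ => r^2/2) r r := by
        have := (hasDerivAt_pow 2 r).div_const 2
        simpa using this
      have : HasDerivAt (fun r => F (r * c, r * s) * (r ^ 2 / 2)) _ r := h1.fun_mul h2
      convert this using 1
      have hlin : fderiv ℝ F (r*c, r*s) (c, s)
          = c * fderiv ℝ F (r*c, r*s) (1, 0) + s * fderiv ℝ F (r*c, r*s) (0, 1) := by
        have : ((c, s) : ℝ × ℝ) = c • ((1:ℝ), (0:ℝ)) + s • ((0:ℝ), (1:ℝ)) := by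
          simp [Prod.ext_iff]
        rw [this, map_add, (fderiv ℝ F (r*c, r*s)).map_smul, (fderiv ℝ F (r*c, r*s)).map_smul,
          smul_eq_mul, smul_eq_mul]
      simp only [hg, hcurl, hφ]
      rw [hlin]
      ring
    have hcont : ContinuousOn (fun r => g (r, θ)) (Set.uIcc (0:ℝ) 1) := by
      rw [Set.uIcc_of_le (by norm_num)]
      have hcc : ContinuousOn (fun r : ℝ => curl (φ (r, θ))) (Set.Icc 0 1) := by
        apply hcurlc.comp (Continuous.continuousOn (by fun_prop))
        intro r hr
        exact hDU (hφD (r, θ) (by rw [abs_le]; exact ⟨by linarith [hr.1], hr.2⟩))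
      simpa [hg] using (continuousOn_id.fun_mul hcc)
    have hftc := intervalIntegral.integral_eq_sub_of_hasDerivAt hderiv
      (hcont.intervalIntegrable)
    rw [← intervalIntegral.integral_of_le (by norm_num : (0:ℝ) ≤ 1)]
    rw [hftc]
    norm_num
  -- Step 4 : outer integral, periodicity
  have step4 : ∫ θ in Set.Ioo (-π) π, F (Real.cos θ, Real.sin θ) * (1/2)
      = (1/2) * ∫ θ in (0:ℝ)..(2*π), F (Real.cos θ, Real.sin θ) := by
    rw [← integral_Ioc_eq_integral_Ioo,
      ← intervalIntegral.integral_of_le (by linarith [Real.pi_pos] : (-π:ℝ) ≤ π)]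
    have hper : Function.Periodic (fun θ : ℝ => F (Real.cos θ, Real.sin θ) * (1/2)) (2*π) := by
      intro θ
      simp [Real.cos_add_two_pi, Real.sin_add_two_pi]
    have := hper.intervalIntegral_add_eq (-π) 0
    rw [(by ring : -π + 2*π = π)] at this
    rw [this]
    rw [zero_add]
    rw [intervalIntegral.integral_mul_const]
    ring
  calc ∫ p in Disk, curl p = ∫ θ in Set.Ioo (-π) π, ∫ r in Set.Ioc (0:ℝ) 1, g (r, θ) := by
        rw [step1, step2]
    _ = ∫ θ in Set.Ioo (-π) π, F (Real.cos θ, Real.sin θ) * (1/2) := by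
        apply setIntegral_congr_fun measurableSet_Ioo
        intro θ _
        exact step3 θ
    _ = (1/2) * ∫ θ in (0:ℝ)..(2*π), F (Real.cos θ, Real.sin θ) := step4
/-- `τ₀(g) + κ(g) = −∫_D F_g`. -/
lemma tau0_add_kappa (g : SympD) (F : ℝ × ℝ → ℝ) (hF : IsPrimitive g F) :
    tau0 g + kappaOf F = - ∫ p in Disk, F p := by
  obtain ⟨⟨V, hVo, hDV, hFs⟩, hdF, hF0⟩ := hF
  have key := stokes_disk F V hVo hDV hFs
  have htau : tau0 g
      = ∫ p in Disk, (1/2) * (p.1 * fderiv ℝ F p (1,0) + p.2 * fderiv ℝ F p (0,1)) := by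
    rw [tau0]
    apply setIntegral_congr_fun disk_measurable
    intro p hp
    have e1 := hdF p hp (1, 0)
    have e2 := hdF p hp (0, 1)
    simp only []
    rw [e1, e2]
    ring
  have hIa : IntegrableOn
      (fun p : ℝ × ℝ => (1/2) * (p.1 * fderiv ℝ F p (1,0) + p.2 * fderiv ℝ F p (0,1)))
      Disk := by
    apply ContinuousOn.integrableOn_compact disk_compact
    have hfdc : ContinuousOn (fderiv ℝ F) V :=
      hFs.continuousOn_fderiv_of_isOpen hVo (by exact_mod_cast le_top)
    apply ContinuousOn.mono (s := V) ?_ hDV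
    apply continuousOn_const.mul
    exact (continuousOn_fst.mul (hfdc.clm_apply continuousOn_const)).add
      (continuousOn_snd.mul (hfdc.clm_apply continuousOn_const))
  have hIF : IntegrableOn F Disk :=
    (hFs.continuousOn.mono hDV).integrableOn_compact disk_compact
  have split : ∫ p in Disk,
        ((1/2) * (p.1 * fderiv ℝ F p (1,0) + p.2 * fderiv ℝ F p (0,1)) + F p)
      = (∫ p in Disk, (1/2) * (p.1 * fderiv ℝ F p (1,0) + p.2 * fderiv ℝ F p (0,1)))
        + ∫ p in Disk, F p := integral_add hIa hIF
  rw [kappaOf, htau]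
  rw [split] at key
  linarith

/-- integral of a constant over the disk. -/
lemma integral_const_disk (c : ℝ) : ∫ _ in Disk, c = Real.pi * c := by
  have key := stokes_disk (fun _ => c) Set.univ isOpen_univ (Set.subset_univ _) contDiffOn_const
  have e1 : ∫ p in Disk,
      ((1/2) * (p.1 * fderiv ℝ (fun _ : ℝ × ℝ => c) p (1,0)
        + p.2 * fderiv ℝ (fun _ : ℝ × ℝ => c) p (0,1)) + (fun _ : ℝ × ℝ => c) p)
      = ∫ _ in Disk, c := by
    apply setIntegral_congr_fun disk_measurable
    intro p _
    simp [fderiv_const]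
  rw [e1] at key
  rw [key, intervalIntegral.integral_const]
  simp
  ring
/-- with `τ' = τ₀ + κ`, for all `g, h ∈ H`,
`τ'(g ∘ h) − τ'(g) − τ'(h) = π·C_{η,x₀}(g,h)`. -/
theorem delta_tau'_eq_pi_ILM (g h gh : SympD) (hcomp : IsComp g h gh)
    (Fg Fh Fgh : ℝ × ℝ → ℝ)
    (hFg : IsPrimitive g Fg) (hFh : IsPrimitive h Fh) (hFgh : IsPrimitive gh Fgh) :
    (tau0 gh + kappaOf Fgh) - (tau0 g + kappaOf Fg) - (tau0 h + kappaOf Fh)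
      = Real.pi * Fg (h.toFun (1, 0)) := by
  have hg' := tau0_add_kappa g Fg hFg
  have hh' := tau0_add_kappa h Fh hFh
  have hgh' := tau0_add_kappa gh Fgh hFgh
  have hcoc := cocycle g h gh hcomp Fg Fh Fgh hFg hFh hFgh
  obtain ⟨Vg, hVgo, hDVg, hFgs⟩ := hFg.1
  obtain ⟨Vh, hVho, hDVh, hFhs⟩ := hFh.1
  obtain ⟨Uh, hUho, hDUh, hhs⟩ := h.smooth
  have hIcomp : IntegrableOn (fun p => Fg (h.toFun p)) Disk := by
    apply ContinuousOn.integrableOn_compact disk_compact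
    exact (hFgs.continuousOn.mono hDVg).comp (hhs.continuousOn.mono hDUh) h.mapsTo
  have hIh : IntegrableOn Fh Disk :=
    (hFhs.continuousOn.mono hDVh).integrableOn_compact disk_compact
  have hIc : IntegrableOn (fun _ : ℝ × ℝ => Fg (h.toFun (1, 0))) Disk :=
    integrableOn_const disk_compact.measure_lt_top.ne
  have e1 : ∫ p in Disk, Fgh p
      = ∫ p in Disk, (Fg (h.toFun p) + Fh p - Fg (h.toFun (1, 0))) :=
    setIntegral_congr_fun disk_measurable (fun p hp => hcoc p hp)
  have e2 : ∫ p in Disk, (Fg (h.toFun p) + Fh p - Fg (h.toFun (1, 0)))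
      = ((∫ p in Disk, Fg (h.toFun p)) + (∫ p in Disk, Fh p))
        - ∫ _ in Disk, Fg (h.toFun (1, 0)) := by
    have t1 := integral_sub (hIcomp.add hIh) hIc
    have t2 := integral_add hIcomp hIh
    simp only [Pi.add_apply] at t1
    rw [t1, t2]
  have e3 := integral_comp_sympD h Fg
  have e4 := integral_const_disk (Fg (h.toFun (1, 0)))
  linarith
end
end
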